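/- arXiv:1111.3609 — 11 statements merged into one kernel-verified Lean document; each statement's English description precedes it below -/
import Mathlib

section
/- Let K be a field with a non-archimedean absolute value |·|, let f(z) = z^d + b_{d-1}z^{d-1} + ... + b_0 ∈ K[z] with d ≥ 2, let a ∈ K*, and define the Hénon map φ(x,y) = (ay, x + f(y)). Set C_f = max over 0 ≤ i < d of max(|b_i|^{1/(d-i)}, 1), and let B⁺ = {(x,y) ∈ K² : |y| > max(|x|^{1/d}, C_f, |a|^{1/(d-1)})}. Then B⁺ is closed under the action of φ, and for (x,y) ∈ B⁺ one has ‖φ(x,y)‖ = |y|^d, where ‖(u,v)‖ = max(|u|,|v|). -/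
open Polynomial Filter

/-! On `B⁺` we have `|y| > 1`, `|x| < |y|^d`, `|a| < |y|^(d-1)` and `|b_i| < |y|^(d-i)`, so `a y`
and every term of `x + f(y)` other than `y^d` is strictly smaller than `|y|^d`. The ultrametric
inequality then gives `|x + f(y)| = |y|^d > |a y|`, and since `|y|^d ≥ |y|` the new second
coordinate clears all the thresholds defining `B⁺` again. -/

lemma Real.rpow_one_div_natCast_sub_lt_iff {u Y : ℝ} (hu : 0 ≤ u) (hY : 0 ≤ Y) {m n : ℕ}
    (hmn : m < n) : u ^ (1 / ((n : ℝ) - m)) < Y ↔ u < Y ^ (n - m) := by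
  rw [← Nat.cast_sub hmn.le, one_div, Real.rpow_inv_lt_iff_of_pos hu hY (by simpa using hmn),
    Real.rpow_natCast]

lemma IsNonarchimedean.apply_eval_eq_pow_natDegree {R : Type*} [CommRing R] [Nontrivial R]
    {v : AbsoluteValue R ℝ} (hna : IsNonarchimedean v) {f : R[X]} (hf : f.Monic) {y : R}
    (h : ∀ i < f.natDegree, v (f.coeff i) * v y ^ i < v y ^ f.natDegree) :
    v (f.eval y) = v y ^ f.natDegree := by
  rw [eval_eq_sum_range, hna.apply_sum_eq_of_lt (fun r ↦ (v.map_neg r).symm)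
    (Finset.self_mem_range_succ f.natDegree)]
  · simp [hf.coeff_natDegree]
  · intro j hj hjd
    simpa [hf.coeff_natDegree] using
      h j (lt_of_le_of_ne (Finset.mem_range_succ_iff.mp hj) hjd)

lemma AbsoluteValue.apply_mul_lt_pow {R : Type*} [Semiring R] {v : AbsoluteValue R ℝ} {d : ℕ}
    {a y : R} (hd : d ≠ 0) (hy : 0 < v y) (ha : v a < v y ^ (d - 1)) :
    v (a * y) < v y ^ d := by
  calc v (a * y) = v a * v y := v.map_mul a y
    _ < v y ^ (d - 1) * v y := mul_lt_mul_of_pos_right ha hy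
    _ = v y ^ d := by rw [← pow_succ, Nat.sub_add_cancel (Nat.one_le_iff_ne_zero.mpr hd)]

lemma IsNonarchimedean.apply_add_eval_eq_pow {R : Type*} [CommRing R] [Nontrivial R]
    {v : AbsoluteValue R ℝ} (hna : IsNonarchimedean v) {d : ℕ} {f : R[X]} {x y : R}
    (hf : f.Monic) (hdeg : f.natDegree = d) (hy : 0 < v y) (hx : v x < v y ^ d)
    (hb : ∀ i < d, v (f.coeff i) < v y ^ (d - i)) :
    v (x + f.eval y) = v y ^ d := by
  subst hdeg
  have hfy : v (f.eval y) = v y ^ f.natDegree := by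
    refine hna.apply_eval_eq_pow_natDegree hf fun i hi ↦ ?_
    calc v (f.coeff i) * v y ^ i < v y ^ (f.natDegree - i) * v y ^ i :=
          mul_lt_mul_of_pos_right (hb i hi) (pow_pos hy i)
      _ = v y ^ f.natDegree := by rw [← pow_add, Nat.sub_add_cancel hi.le]
  rw [hna.add_eq_right_of_lt (hfy ▸ hx), hfy]

/-- for a non-archimedean absolute value, the forward escape region
`B⁺` of a Hénon map `φ(x,y) = (ay, x + f(y))` is closed under `φ`, and on `B⁺`
one has `‖φ(x,y)‖ = |y|^d`. -/
theorem stmt0 {K : Type*} [Field K] (v : AbsoluteValue K ℝ)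
    (hna : IsNonarchimedean v) (d : ℕ) (hd : 2 ≤ d)
    (f : K[X]) (hmonic : f.Monic) (hdeg : f.natDegree = d)
    (a : K)
    (φ : K × K → K × K) (hφ : ∀ P, φ P = (a * P.2, P.1 + f.eval P.2))
    (Cf : ℝ)
    (hCf : Cf = (Finset.range d).sup' (Finset.nonempty_range_iff.mpr (by omega))
      (fun i => max ((v (f.coeff i)) ^ ((1 : ℝ) / ((d : ℝ) - (i : ℝ)))) 1))
    (Bplus : Set (K × K))
    (hB : Bplus = {P : K × K | v P.2 > max ((v P.1) ^ ((1 : ℝ) / (d : ℝ)))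
      (max Cf ((v a) ^ ((1 : ℝ) / ((d : ℝ) - 1))))}) :
    (∀ P ∈ Bplus, φ P ∈ Bplus) ∧
    (∀ P ∈ Bplus, max (v (φ P).1) (v (φ P).2) = (v P.2) ^ d) := by
  have hCf_ge : ∀ i < d, max (v (f.coeff i) ^ ((1 : ℝ) / ((d : ℝ) - i))) 1 ≤ Cf := fun i hi ↦
    hCf ▸ Finset.le_sup' (fun i ↦ max (v (f.coeff i) ^ ((1 : ℝ) / ((d : ℝ) - i))) 1)
      (Finset.mem_range.mpr hi)
  have mem_iff : ∀ x y : K,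
      (x, y) ∈ Bplus ↔ v x < v y ^ d ∧ Cf < v y ∧ v a < v y ^ (d - 1) := by
    intro x y
    have hx := Real.rpow_one_div_natCast_sub_lt_iff (v.nonneg x) (v.nonneg y)
      (show 0 < d by omega)
    have ha := Real.rpow_one_div_natCast_sub_lt_iff (v.nonneg a) (v.nonneg y)
      (show 1 < d by omega)
    simp only [CharP.cast_eq_zero, sub_zero, Nat.sub_zero, Nat.cast_one] at hx ha
    simp only [hB, Set.mem_ofPred_eq, gt_iff_lt, max_lt_iff, hx, ha]
  have hescape : ∀ x y : K, (x, y) ∈ Bplus →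
      1 < v y ∧ v (a * y) < v y ^ d ∧ v (x + f.eval y) = v y ^ d := by
    intro x y hP
    obtain ⟨hx, hCy, hay⟩ := (mem_iff x y).mp hP
    have hy : 1 < v y := ((le_max_right _ _).trans (hCf_ge 0 (by omega))).trans_lt hCy
    refine ⟨hy, v.apply_mul_lt_pow (by omega) (by linarith) hay,
      hna.apply_add_eval_eq_pow hmonic hdeg (by linarith) hx fun i hi ↦ ?_⟩
    exact (Real.rpow_one_div_natCast_sub_lt_iff (v.nonneg _) (v.nonneg y) hi).mp
      (((le_max_left _ _).trans (hCf_ge i hi)).trans_lt hCy)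
  refine ⟨fun ⟨x, y⟩ hP ↦ ?_, fun ⟨x, y⟩ hP ↦ ?_⟩
  · obtain ⟨hy, hfst, hsnd⟩ := hescape x y hP
    obtain ⟨-, hCy, hay⟩ := (mem_iff x y).mp hP
    have hy_le : v y ≤ v y ^ d := le_self_pow₀ hy.le (by omega)
    rw [hφ, mem_iff, hsnd]
    exact ⟨hfst.trans_le (le_self_pow₀ (one_le_pow₀ hy.le) (by omega)),
      hCy.trans_le hy_le, hay.trans_le (pow_le_pow_left₀ (v.nonneg y) hy_le _)⟩
  · obtain ⟨-, hfst, hsnd⟩ := hescape x y hP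
    rw [hφ, hsnd]
    exact max_eq_right hfst.le
end

section
/- Let K be a field with a non-archimedean absolute value with |2| = 1, let b ∈ K with |b| > 1, and φ(x,y) = (y, x + y² + b). Suppose P = (x,y) is such that P, φ(P), and φ⁻¹(P) all lie outside B⁺ ∪ B⁻, where B⁺ = {(x,y) : |y|² > max(|x|,|b|,1)} and B⁻ = {(x,y) : |x|² > max(|y|,|b|,1)}, and suppose K contains a square root γ of −b. Then there exist γ₁, γ₂ ∈ K with γ₁² = γ₂² = −b such that |x − γ₂| ≤ 1 and |y − γ₁| ≤ 1. -/
private lemma bdd_aux (a c B : ℝ) (hB : 1 < B) (ha : 0 ≤ a) (hc : 0 ≤ c)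
    (h1 : c ^ 2 ≤ max a B) (h2 : a ^ 2 ≤ max c B) : a ≤ B := by
  rcases le_total a B with h | h
  · exact h
  · rw [max_eq_left h] at h1
    rcases le_total c B with h' | h'
    · rw [max_eq_right h'] at h2
      nlinarith
    · rw [max_eq_left h'] at h2
      nlinarith [sq_nonneg (a - c), sq_nonneg a, sq_nonneg c]

private lemma key_aux {K : Type*} [Field K] (v : AbsoluteValue K ℝ)
    (hna : IsNonarchimedean v) (h2 : v 2 = 1) (b γ z : K) (hγ : γ ^ 2 = -b)
    (hγ0 : 0 < v γ) (hz : v (z ^ 2 + b) ≤ v γ) :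
    ∃ γ₁ : K, γ₁ ^ 2 = -b ∧ v (z - γ₁) ≤ 1 := by
  have hprod : v (z - γ) * v (z + γ) = v (z ^ 2 + b) := by
    rw [← map_mul]
    congr 1
    linear_combination -hγ
  have hmax : v γ ≤ max (v (z - γ)) (v (z + γ)) := by
    have h := hna (z + γ) (-(z - γ))
    have e : (z + γ) + -(z - γ) = 2 * γ := by ring
    rw [e, map_mul, h2, one_mul, v.map_neg] at h
    rw [max_comm] at h
    exact h
  rcases le_max_iff.mp hmax with h | h
  · refine ⟨-γ, by rw [neg_pow, hγ]; ring, ?_⟩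
    have h0 : 0 < v (z - γ) := lt_of_lt_of_le hγ0 h
    have : v (z - γ) * v (z + γ) ≤ v (z - γ) := hprod.trans_le (hz.trans h)
    have : v (z + γ) ≤ 1 := by
      nlinarith
    simpa [sub_neg_eq_add] using this
  · refine ⟨γ, hγ, ?_⟩
    have h0 : 0 < v (z + γ) := lt_of_lt_of_le hγ0 h
    have : v (z - γ) * v (z + γ) ≤ v (z + γ) := hprod.trans_le (hz.trans h)
    nlinarith

/-- if `P`, `φ(P)` and `φ⁻¹(P)` all lie outside the escape regions of
the quadratic Hénon map `φ(x,y) = (y, x+y²+b)` with `|b| > 1`, `|2| = 1`, and `K`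
contains a square root of `-b`, then the coordinates of `P` are within distance 1
of square roots of `-b`. -/
theorem stmt4 {K : Type*} [Field K] (v : AbsoluteValue K ℝ)
    (hna : IsNonarchimedean v)
    (h2 : v 2 = 1) (b : K) (hb : 1 < v b) (γ : K) (hγ : γ ^ 2 = -b)
    (x y : K)
    (hP1 : ¬ ((v y) ^ 2 > max (v x) (max (v b) 1)))
    (hP2 : ¬ ((v x) ^ 2 > max (v y) (max (v b) 1)))
    (hfP1 : ¬ ((v (x + y ^ 2 + b)) ^ 2 > max (v y) (max (v b) 1)))
    (hfP2 : ¬ ((v y) ^ 2 > max (v (x + y ^ 2 + b)) (max (v b) 1)))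
    (hiP1 : ¬ ((v x) ^ 2 > max (v (y - x ^ 2 - b)) (max (v b) 1)))
    (hiP2 : ¬ ((v (y - x ^ 2 - b)) ^ 2 > max (v x) (max (v b) 1))) :
    ∃ γ₁ γ₂ : K, γ₁ ^ 2 = -b ∧ γ₂ ^ 2 = -b ∧ v (x - γ₂) ≤ 1 ∧ v (y - γ₁) ≤ 1 := by
  push_neg at hP1 hP2 hfP1 hfP2 hiP1 hiP2
  have hBmax : max (v b) 1 = v b := max_eq_left hb.le
  rw [hBmax] at hP1 hP2 hfP1 hiP2
  -- |x|, |y| ≤ |b|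
  have hx : v x ≤ v b :=
    bdd_aux (v x) (v y) (v b) hb (v.nonneg x) (v.nonneg y) hP1 hP2
  have hy : v y ≤ v b :=
    bdd_aux (v y) (v x) (v b) hb (v.nonneg y) (v.nonneg x) hP2 hP1
  -- |γ|² = |b|
  have hγb : v γ ^ 2 = v b := by
    rw [← map_pow, hγ, v.map_neg]
  have hγ1 : 1 < v γ := by
    nlinarith [v.nonneg γ]
  have hγ0 : 0 < v γ := lt_trans one_pos hγ1
  -- |x| ≤ |γ|, |y| ≤ |γ|
  have hx2 : v x ^ 2 ≤ max (v y) (v b) := hP2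
  have hxγ : v x ≤ v γ := by
    have : v x ^ 2 ≤ v b := le_trans hP2 (max_le hy le_rfl)
    nlinarith [v.nonneg x]
  have hyγ : v y ≤ v γ := by
    have : v y ^ 2 ≤ v b := le_trans hP1 (max_le hx le_rfl)
    nlinarith [v.nonneg y]
  -- |x + y² + b| ≤ |γ| and |y − x² − b| ≤ |γ|
  have hfγ : v (x + y ^ 2 + b) ≤ v γ := by
    have : v (x + y ^ 2 + b) ^ 2 ≤ v b := le_trans hfP1 (max_le hy le_rfl)
    nlinarith [v.nonneg (x + y ^ 2 + b)]
  have hiγ : v (y - x ^ 2 - b) ≤ v γ := by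
    have : v (y - x ^ 2 - b) ^ 2 ≤ v b := le_trans hiP2 (max_le hx le_rfl)
    nlinarith [v.nonneg (y - x ^ 2 - b)]
  -- |y² + b| ≤ |γ|
  have hyb : v (y ^ 2 + b) ≤ v γ := by
    have h := hna (x + y ^ 2 + b) (-x)
    have e : (x + y ^ 2 + b) + -x = y ^ 2 + b := by ring
    rw [e, v.map_neg] at h
    exact h.trans (max_le hfγ hxγ)
  -- |x² + b| ≤ |γ|
  have hxb : v (x ^ 2 + b) ≤ v γ := by
    have h := hna y (-(y - x ^ 2 - b))
    have e : y + -(y - x ^ 2 - b) = x ^ 2 + b := by ring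
    rw [e, v.map_neg] at h
    exact h.trans (max_le hyγ hiγ)
  obtain ⟨γ₁, hγ₁, hY⟩ := key_aux v hna h2 b γ y hγ hγ0 hyb
  obtain ⟨γ₂, hγ₂, hX⟩ := key_aux v hna h2 b γ x hγ hγ0 hxb
  exact ⟨γ₁, γ₂, hγ₁, hγ₂, hX, hY⟩
end

section
/- Let p be an odd prime, b ∈ ℚ_p with |b|_p > 1, and φ(x,y) = (y, x + y² + b). If (x,y) ∈ ℚ_p² is a periodic point of φ, then v_p(x) = v_p(y) = (1/2)·v_p(b); in particular v_p(b) is even. -/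
/-!
Along a periodic orbit, every coordinate is the second coordinate of some orbit point, and
the orbit is finite; let `r` be the largest norm of a coordinate. If `r² > |b|`, the point whose
second coordinate has norm `r` is mapped to one whose second coordinate has norm `r²` > `r`.
So `r² ≤ |b|`, hence `r < |b|`, and a second coordinate `u` with `|u|² < |b|` would be followed
by one of norm `|b|` > `r`. Thus `|u|² = |b|` for every coordinate `u` on the orbit.
-/

open Set Function

namespace Function.IsPeriodicPt

variable {α : Type*} {f : α → α} {n : ℕ} {x : α}

theorem finite_range_iterate (h : IsPeriodicPt f n x) (hn : 0 < n) :
    (range fun m => f^[m] x).Finite :=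
  ((finite_Iio n).image fun m => f^[m] x).subset <| by
    rintro _ ⟨m, rfl⟩
    exact ⟨m % n, Nat.mod_lt m hn, h.iterate_mod_apply m⟩

theorem mapsTo_range_iterate (f : α → α) (x : α) :
    MapsTo f (range fun m => f^[m] x) (range fun m => f^[m] x) := by
  rintro _ ⟨m, rfl⟩
  exact ⟨m + 1, iterate_succ_apply' f m x⟩

theorem surjOn_range_iterate (h : IsPeriodicPt f n x) (hn : 0 < n) :
    SurjOn f (range fun m => f^[m] x) (range fun m => f^[m] x) := by
  rintro _ ⟨m, rfl⟩
  refine ⟨f^[m + n - 1] x, ⟨_, rfl⟩, ?_⟩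
  rw [← iterate_succ_apply' f, show (m + n - 1).succ = m + n by omega, iterate_add_apply, h.eq]

end Function.IsPeriodicPt

theorem norm_add_eq_right_of_norm_lt {E : Type*} [SeminormedAddGroup E] [IsUltrametricDist E]
    {x y : E} (h : ‖x‖ < ‖y‖) : ‖x + y‖ = ‖y‖ := by
  rw [IsUltrametricDist.norm_add_eq_max_of_norm_ne_norm h.ne, max_eq_right h.le]

theorem Padic.valuation_eq_of_norm_eq {p : ℕ} [Fact p.Prime] {x y : ℚ_[p]} (h : ‖x‖ = ‖y‖) :
    x.valuation = y.valuation := by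
  rcases eq_or_ne x 0 with rfl | hx
  · rw [norm_zero, eq_comm, norm_eq_zero] at h
    rw [h]
  have hy : y ≠ 0 := by rwa [← norm_ne_zero_iff, ← h, norm_ne_zero_iff]
  have hp : (1 : ℝ) < p := by exact_mod_cast (Fact.out : p.Prime).one_lt
  rw [Padic.norm_eq_zpow_neg_valuation hx, Padic.norm_eq_zpow_neg_valuation hy,
    zpow_right_inj₀ (zero_lt_one.trans hp) hp.ne'] at h
  exact neg_inj.mp h

section Henon

variable {K : Type*} [NormedField K] [IsUltrametricDist K]

def henonMap (b : K) (P : K × K) : K × K := (P.2, P.1 + P.2 ^ 2 + b)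

theorem norm_snd_sq_eq_of_henonMap_invariant {b : K} (hb : 1 < ‖b‖) {S : Set (K × K)}
    (hS : S.Finite) (hmaps : MapsTo (henonMap b) S S) (hsurj : SurjOn (henonMap b) S S)
    ⦃P : K × K⦄ (hP : P ∈ S) : ‖P.2‖ ^ 2 = ‖b‖ := by
  obtain ⟨Q, hQ, hmax⟩ := S.exists_max_image (fun P => ‖P.2‖) hS ⟨P, hP⟩
  set r := ‖Q.2‖
  have fst_le : ∀ P ∈ S, ‖P.1‖ ≤ r := by
    intro P hP
    obtain ⟨R, hR, rfl⟩ := hsurj hP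
    exact hmax R hR
  have next_le : ∀ P ∈ S, ‖(henonMap b P).2‖ ≤ r := fun P hP => hmax _ (hmaps hP)
  have hr_sq : r ^ 2 ≤ ‖b‖ := by
    by_contra! hlt
    have hr : r < r ^ 2 := by nlinarith [norm_nonneg Q.2]
    have hsmall : ‖Q.1 + b‖ < ‖Q.2 ^ 2‖ := by
      rw [norm_pow]
      exact (IsUltrametricDist.norm_add_le_max _ _).trans_lt
        (max_lt ((fst_le Q hQ).trans_lt hr) hlt)
    have hnext : ‖(henonMap b Q).2‖ = r ^ 2 := by
      rw [henonMap, add_right_comm, norm_add_eq_right_of_norm_lt hsmall, norm_pow]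
    linarith [next_le Q hQ]
  have hr : r < ‖b‖ := by nlinarith [norm_nonneg Q.2]
  refine le_antisymm (hr_sq.trans' ?_) (not_lt.mp fun hlt => ?_)
  · exact pow_le_pow_left₀ (norm_nonneg _) (hmax P hP) 2
  · have hsmall : ‖P.1 + P.2 ^ 2‖ < ‖b‖ := by
      rw [← norm_pow] at hlt
      exact (IsUltrametricDist.norm_add_le_max _ _).trans_lt
        (max_lt ((fst_le P hP).trans_lt hr) hlt)
    have hnext : ‖(henonMap b P).2‖ = ‖b‖ := norm_add_eq_right_of_norm_lt hsmall
    linarith [next_le P hP]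

theorem norm_sq_eq_of_isPeriodicPt_henonMap {b : K} (hb : 1 < ‖b‖) {x y : K} {N : ℕ}
    (hN : 0 < N) (hper : IsPeriodicPt (henonMap b) N (x, y)) :
    ‖x‖ ^ 2 = ‖b‖ ∧ ‖y‖ ^ 2 = ‖b‖ := by
  have norm_sq := norm_snd_sq_eq_of_henonMap_invariant hb (hper.finite_range_iterate hN)
    (IsPeriodicPt.mapsTo_range_iterate _ _) (hper.surjOn_range_iterate hN)
  have hmem : (x, y) ∈ range fun m => (henonMap b)^[m] (x, y) := ⟨0, rfl⟩
  obtain ⟨Q, hQ, hQxy⟩ := hper.surjOn_range_iterate hN hmem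
  have hQx : Q.2 = x := congrArg Prod.fst hQxy
  exact ⟨hQx ▸ norm_sq hQ, norm_sq hmem⟩

end Henon

theorem Padic.two_mul_valuation_eq_of_norm_sq_eq {p : ℕ} [Fact p.Prime] {x b : ℚ_[p]}
    (h : ‖x‖ ^ 2 = ‖b‖) : 2 * x.valuation = b.valuation := by
  rw [← norm_pow] at h
  exact_mod_cast (Padic.valuation_pow x 2).symm.trans (Padic.valuation_eq_of_norm_eq h)

theorem stmt5_general (p : ℕ) [Fact p.Prime] (b : ℚ_[p]) (hb : 1 < ‖b‖)
    (φ : ℚ_[p] × ℚ_[p] → ℚ_[p] × ℚ_[p])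
    (hφ : ∀ P, φ P = (P.2, P.1 + P.2 ^ 2 + b))
    (x y : ℚ_[p]) (N : ℕ) (hN : 1 ≤ N) (hper : φ^[N] (x, y) = (x, y)) :
    2 * x.valuation = b.valuation ∧ 2 * y.valuation = b.valuation ∧
      Even b.valuation := by
  obtain rfl : φ = henonMap b := funext hφ
  obtain ⟨hx, hy⟩ := norm_sq_eq_of_isPeriodicPt_henonMap hb hN hper
  have hvx := Padic.two_mul_valuation_eq_of_norm_sq_eq hx
  exact ⟨hvx, Padic.two_mul_valuation_eq_of_norm_sq_eq hy, ⟨x.valuation, by omega⟩⟩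

/-- for an odd prime `p`, `b ∈ ℚ_p` with `|b|_p > 1`, every periodic
point `(x,y)` of `φ(x,y) = (y, x+y²+b)` satisfies
`v_p(x) = v_p(y) = v_p(b)/2`; in particular `v_p(b)` is even. -/
theorem stmt5 (p : ℕ) [Fact p.Prime] (hp : Odd p) (b : ℚ_[p]) (hb : 1 < ‖b‖)
    (φ : ℚ_[p] × ℚ_[p] → ℚ_[p] × ℚ_[p])
    (hφ : ∀ P, φ P = (P.2, P.1 + P.2 ^ 2 + b))
    (x y : ℚ_[p]) (N : ℕ) (hN : 1 ≤ N) (hper : φ^[N] (x, y) = (x, y)) :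
    2 * x.valuation = b.valuation ∧ 2 * y.valuation = b.valuation ∧
      Even b.valuation :=
  stmt5_general p b hb φ hφ x y N hN hper
end

section
/- Let b ∈ ℚ and φ(x,y) = (y, x + y² + b). If φ has a periodic point in ℚ², then the denominator of b (in lowest terms) is a perfect square. -/
private lemma nat_isSquare_of_even_factorization {n : ℕ} (hn : n ≠ 0)
    (h : ∀ p, Even (n.factorization p)) : IsSquare n := by
  refine ⟨n.factorization.prod fun p k => p ^ (k / 2), ?_⟩
  conv_lhs => rw [← Nat.factorization_prod_pow_eq_self hn]
  rw [Finsupp.prod, Finsupp.prod, ← Finset.prod_mul_distrib]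
  refine Finset.prod_congr rfl fun p hp => ?_
  rw [← pow_add]
  congr 1
  obtain ⟨r, hr⟩ := h p
  omega

/-- if the quadratic Hénon map `φ(x,y) = (y, x+y²+b)` over `ℚ` has a
rational periodic point, then the denominator of `b` is a perfect square. -/
theorem stmt6 (b : ℚ)
    (φ : ℚ × ℚ → ℚ × ℚ) (hφ : ∀ P, φ P = (P.2, P.1 + P.2 ^ 2 + b))
    (h : ∃ (P : ℚ × ℚ) (N : ℕ), 1 ≤ N ∧ φ^[N] P = P) :
    IsSquare b.den := by
  obtain ⟨P, N, hN, hP⟩ := h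
  rcases eq_or_ne b 0 with rfl | hb
  · exact ⟨1, rfl⟩
  set y : ℕ → ℚ := fun n => (φ^[n] P).2 with hy
  have hx : ∀ n, (φ^[n + 1] P).1 = y n := by
    intro n; rw [Function.iterate_succ_apply', hφ]
  have hrec : ∀ n, y (n + 2) = y n + (y (n + 1)) ^ 2 + b := by
    intro n
    show (φ^[n + 2] P).2 = _
    rw [show n + 2 = (n + 1) + 1 from rfl, Function.iterate_succ_apply', hφ]
    simp only
    rw [hx n]
  have hper : ∀ n, y (n + N) = y n := by
    intro n
    show (φ^[n + N] P).2 = (φ^[n] P).2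
    rw [Function.iterate_add_apply, hP]
  have hmul : ∀ k n, y (n + k * N) = y n := by
    intro k
    induction k with
    | zero => intro n; simp
    | succ k ih =>
      intro n
      have : n + (k + 1) * N = (n + k * N) + N := by ring
      rw [this, hper, ih]
  have hmod : ∀ n, y n = y (n % N) := by
    intro n
    conv_lhs => rw [← Nat.mod_add_div' n N]
    exact hmul _ _
  apply nat_isSquare_of_even_factorization b.pos.ne'
  intro p
  by_cases hpp : p.Prime
  swap
  · simp [Nat.factorization_eq_zero_of_not_prime _ hpp]
  by_cases hpd : p ∣ b.den
  swap
  · simp [Nat.factorization_eq_zero_of_not_dvd hpd]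
  haveI : Fact p.Prime := ⟨hpp⟩
  have hnum : ¬(p : ℤ) ∣ b.num := by
    intro hd
    have h1 : p ∣ b.num.natAbs := Int.natCast_dvd.mp hd
    have h2 : p ∣ 1 := (b.reduced) ▸ Nat.dvd_gcd h1 hpd
    exact hpp.one_lt.ne' (Nat.eq_one_of_dvd_one h2)
  have hval : padicValRat p b = -(b.den.factorization p : ℤ) := by
    rw [padicValRat_def, padicValInt.eq_zero_of_not_dvd hnum,
      Nat.factorization_def _ hpp]
    simp
  have hbnorm : padicNorm p b = (p : ℚ) ^ (b.den.factorization p : ℤ) := by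
    rw [padicNorm.eq_zpow_of_nonzero hb, hval, neg_neg]
  have hp1 : (1 : ℚ) < p := by exact_mod_cast hpp.one_lt
  have hp0 : (0 : ℚ) < p := lt_trans one_pos hp1
  have hepos : 0 < b.den.factorization p :=
    hpp.factorization_pos_of_dvd b.pos.ne' hpd
  have hbig : 1 < padicNorm p b := by
    rw [hbnorm]
    exact one_lt_zpow₀ hp1 (by exact_mod_cast hepos)
  obtain ⟨n0, -, hmax⟩ := Finset.exists_max_image (Finset.range N)
    (fun n => padicNorm p (y n)) ⟨0, Finset.mem_range.mpr hN⟩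
  set M := padicNorm p (y n0) with hM
  have hbound : ∀ n, padicNorm p (y n) ≤ M := by
    intro n
    rw [hmod n]
    exact hmax _ (Finset.mem_range.mpr (Nat.mod_lt _ (by omega)))
  set m := n0 + (N - 1) with hm
  have hmid : y (m + 1) = y n0 := by
    have : m + 1 = n0 + N := by omega
    rw [this, hper]
  have key : padicNorm p (y n0 ^ 2 + b) ≤ M := by
    have h2 : y n0 ^ 2 + b = y (m + 2) - y m := by
      rw [hrec m, hmid]; ring
    rw [h2]
    exact le_trans padicNorm.sub (max_le (hbound _) (hbound _))
  have hsq : padicNorm p (y n0 ^ 2) = M ^ 2 := by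
    rw [sq, sq, padicNorm.mul]
  have hMb : M ^ 2 = padicNorm p b := by
    by_contra hne
    have hne' : padicNorm p (y n0 ^ 2) ≠ padicNorm p b := by
      rw [hsq]; exact hne
    have heq := padicNorm.add_eq_max_of_ne hne'
    rw [heq, hsq] at key
    have h1 : M ^ 2 ≤ M := le_trans (le_max_left _ _) key
    have h2 : padicNorm p b ≤ M := le_trans (le_max_right _ _) key
    nlinarith [padicNorm.nonneg (p := p) (y n0), hbig]
  have hM1 : 1 < M := by nlinarith [hbig, hMb, padicNorm.nonneg (p := p) (y n0)]
  have hy0 : y n0 ≠ 0 := by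
    intro h0
    have : M = 0 := by rw [hM, h0, padicNorm.zero]
    linarith
  have hMv : M = (p : ℚ) ^ (-padicValRat p (y n0)) :=
    hM.trans (padicNorm.eq_zpow_of_nonzero hy0)
  rw [hbnorm, hMv, sq, ← zpow_add₀ hp0.ne'] at hMb
  have heq := zpow_right_injective₀ hp0 hp1.ne' hMb
  have : Even ((b.den.factorization p : ℤ)) := ⟨-padicValRat p (y n0), heq.symm⟩
  exact_mod_cast this
end

section
/- Let b ∈ ℚ, φ(x,y) = (y, x + y² + b), and suppose Q ∈ ℚ² is periodic for φ. Then the logarithmic Weil height of Q satisfies h(Q) ≤ (1/2)·h(b) + log 3, where h(Q) = h(x) + h(y) is bounded via: for every place v of ℚ, log⁺ max(|x|_v, |y|_v) ≤ (1/2)·log⁺|b|_v + log(3)_v, with (3)_v = 3 at the archimedean place and 1 at finite places. -/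
/-!
Fix a place `v` and let `M` be the largest `v`-size of a coordinate along the periodic orbit.
Every first coordinate on the orbit is the second coordinate of the preceding point, so `M` is
attained at the second coordinate `w` of some orbit point `(u, w)`, whose image `(w, z)` satisfies
`w² = z - u - b`. Hence `M² ≤ 2M + |b|_v`, so `max(M,1)² ≤ 9 max(|b|_v,1)`; at a
non-archimedean place even `M² ≤ max(M, |b|_v)`, so `max(M,1)² ≤ max(|b|_v,1)`. For the global
bound, `∏_p max(|b|_p,1) = den b` and `max(|b|,1) · den b = max(|num b|, den b)`.
-/

namespace Function.IsPeriodicPt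

variable {α : Type*} {f : α → α} {x : α} {n : ℕ}

theorem exists_iterate_forall_le {β : Type*} [LinearOrder β] (hx : IsPeriodicPt f n x)
    (hn : 0 < n) (g : α → β) : ∃ k, ∀ j, g (f^[j] x) ≤ g (f^[k] x) := by
  obtain ⟨k, -, hk⟩ := (Finset.range (minimalPeriod f x)).exists_max_image (fun j ↦ g (f^[j] x))
    ⟨0, Finset.mem_range.2 (hx.minimalPeriod_pos hn)⟩
  refine ⟨k, fun j ↦ ?_⟩
  rw [← iterate_mod_minimalPeriod_eq]
  exact hk _ (Finset.mem_range.2 (Nat.mod_lt _ (hx.minimalPeriod_pos hn)))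

theorem iterate_eq_apply_iterate (hx : IsPeriodicPt f n x) (hn : 0 < n) (j : ℕ) :
    f^[j] x = f (f^[j + n - 1] x) := by
  rw [← iterate_succ_apply' f, show (j + n - 1).succ = j + n by omega, iterate_add_apply, hx.eq]

end Function.IsPeriodicPt

theorem max_one_sq_le_nine_mul {M B : ℝ} (hB : 0 ≤ B) (hM : M ^ 2 ≤ 2 * M + B) :
    max M 1 ^ 2 ≤ 9 * max B 1 := by
  have hB1 := le_max_right B 1
  rcases le_total M 1 with h | h
  · rw [max_eq_right h]; linarith
  · rw [max_eq_left h]; nlinarith [le_max_left B 1]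

theorem max_one_sq_le_of_sq_le_max {M B : ℝ} (hM : M ^ 2 ≤ max M B) :
    max M 1 ^ 2 ≤ max B 1 := by
  rcases le_total M 1 with h | h
  · rw [max_eq_right h, one_pow]; exact le_max_right _ _
  · rw [max_eq_left h]
    rcases le_max_iff.1 hM with hM | hM
    · nlinarith [le_max_right B 1]
    · exact hM.trans (le_max_left _ _)

theorem max_max_one_le_max_one {a c M : ℝ} (ha : a ≤ M) (hc : c ≤ M) :
    max a (max c 1) ≤ max M 1 :=
  max_le (le_max_of_le_left ha) (max_le_max hc le_rfl)

theorem Real.log_le_half_log_of_sq_le {t s : ℝ} (ht : 0 < t) (h : t ^ 2 ≤ s) :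
    Real.log t ≤ 1 / 2 * Real.log s := by
  have := Real.log_le_log (by positivity) h
  rw [Real.log_pow] at this
  push_cast at this
  linarith

section Henon

variable {R : Type*} [CommRing R]

def henon (b : R) (P : R × R) : R × R := (P.2, P.1 + P.2 ^ 2 + b)

variable (v : AbsoluteValue R ℝ) (b : R)

theorem abv_sq_snd_le (P : R × R) : v P.2 ^ 2 ≤ v P.1 + v (henon b P).2 + v b := by
  have : P.2 ^ 2 = (henon b P).2 + -P.1 + -b := by simp only [henon]; ring
  calc v P.2 ^ 2 = v (P.2 ^ 2) := by rw [sq, sq, v.map_mul]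
    _ ≤ v (henon b P).2 + v (-P.1) + v (-b) := by
      rw [this]; exact (v.add_le _ _).trans (by gcongr; exact v.add_le _ _)
    _ = _ := by rw [v.map_neg, v.map_neg]; ring

theorem abv_sq_snd_le_max (hv : IsNonarchimedean v) (P : R × R) :
    v P.2 ^ 2 ≤ max (v P.1) (max (v (henon b P).2) (v b)) := by
  have : P.2 ^ 2 = -P.1 + ((henon b P).2 + -b) := by simp only [henon]; ring
  calc v P.2 ^ 2 = v (P.2 ^ 2) := by rw [sq, sq, v.map_mul]
    _ ≤ max (v (-P.1)) (max (v (henon b P).2) (v (-b))) := by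
      rw [this]; exact (hv _ _).trans (max_le_max le_rfl (hv _ _))
    _ = _ := by rw [v.map_neg, v.map_neg]

variable {b} {n : ℕ} {P : R × R}

theorem exists_iterate_abv_le (hP : Function.IsPeriodicPt (henon b) n P) (hn : 0 < n) :
    ∃ k, ∀ j, v ((henon b)^[j] P).1 ≤ v ((henon b)^[k] P).2 ∧
      v ((henon b)^[j] P).2 ≤ v ((henon b)^[k] P).2 := by
  obtain ⟨k, hk⟩ := hP.exists_iterate_forall_le hn (fun Q ↦ v Q.2)
  refine ⟨k, fun j ↦ ⟨?_, hk j⟩⟩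
  rw [hP.iterate_eq_apply_iterate hn]
  exact hk _

theorem exists_abv_le_and_sq_le (hP : Function.IsPeriodicPt (henon b) n P) (hn : 0 < n) :
    ∃ M, v P.1 ≤ M ∧ v P.2 ≤ M ∧ M ^ 2 ≤ 2 * M + v b := by
  obtain ⟨k, hk⟩ := exists_iterate_abv_le v hP hn
  have hsucc := (hk (k + 1)).2
  rw [Function.iterate_succ_apply'] at hsucc
  refine ⟨_, (hk 0).1, (hk 0).2, ?_⟩
  linarith [abv_sq_snd_le v b ((henon b)^[k] P), (hk k).1]

theorem exists_abv_le_and_sq_le_max (hv : IsNonarchimedean v)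
    (hP : Function.IsPeriodicPt (henon b) n P) (hn : 0 < n) :
    ∃ M, v P.1 ≤ M ∧ v P.2 ≤ M ∧ M ^ 2 ≤ max M (v b) := by
  obtain ⟨k, hk⟩ := exists_iterate_abv_le v hP hn
  have hsucc := (hk (k + 1)).2
  rw [Function.iterate_succ_apply'] at hsucc
  refine ⟨_, (hk 0).1, (hk 0).2, (abv_sq_snd_le_max v b hv _).trans ?_⟩
  exact max_le (le_max_of_le_left (hk k).1) (max_le_max hsucc le_rfl)

theorem log_max_abv_le (hP : Function.IsPeriodicPt (henon b) n P) (hn : 0 < n) :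
    Real.log (max (v P.1) (max (v P.2) 1)) ≤ 1 / 2 * Real.log (max (v b) 1) + Real.log 3 := by
  obtain ⟨M, h₁, h₂, hM⟩ := exists_abv_le_and_sq_le v hP hn
  have hsq : max (v P.1) (max (v P.2) 1) ^ 2 ≤ 9 * max (v b) 1 :=
    (pow_le_pow_left₀ (by positivity) (max_max_one_le_max_one h₁ h₂) 2).trans
      (max_one_sq_le_nine_mul (v.nonneg b) hM)
  calc _ ≤ 1 / 2 * Real.log (3 ^ 2 * max (v b) 1) :=
        Real.log_le_half_log_of_sq_le (by positivity) (by norm_num [hsq])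
    _ = _ := by
      rw [Real.log_mul (by norm_num) (by positivity), Real.log_pow]
      ring

theorem log_max_abv_le_of_isNonarchimedean (hv : IsNonarchimedean v)
    (hP : Function.IsPeriodicPt (henon b) n P) (hn : 0 < n) :
    Real.log (max (v P.1) (max (v P.2) 1)) ≤ 1 / 2 * Real.log (max (v b) 1) := by
  obtain ⟨M, h₁, h₂, hM⟩ := exists_abv_le_and_sq_le_max v hv hP hn
  exact Real.log_le_half_log_of_sq_le (by positivity)
    ((pow_le_pow_left₀ (by positivity) (max_max_one_le_max_one h₁ h₂) 2).trans
      (max_one_sq_le_of_sq_le_max hM))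

end Henon

theorem Rat.AbsoluteValue.isNonarchimedean_padic (p : ℕ) [Fact p.Prime] :
    IsNonarchimedean (Rat.AbsoluteValue.padic p) := fun q r ↦ by
  simp only [Rat.AbsoluteValue.padic_eq_padicNorm]
  exact_mod_cast padicNorm.nonarchimedean

theorem padicNorm_max_one_eq_inv_padicNorm_den (p : ℕ) [hp : Fact p.Prime] (q : ℚ) :
    max (padicNorm p q) 1 = (padicNorm p q.den)⁻¹ := by
  nth_rewrite 1 [← Rat.num_div_den q]
  rw [padicNorm.div]
  by_cases hpq : p ∣ q.den
  · have hnum : padicNorm p q.num = 1 := by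
      refine (padicNorm.int_eq_one_iff _).2 fun hpn ↦ ?_
      exact hp.out.coprime_iff_not_dvd.1 (q.reduced.coprime_dvd_left (Int.natCast_dvd.1 hpn)) hpq
    have hden := (padicNorm.nat_lt_one_iff q.den).2 hpq
    have hpos : 0 < padicNorm p q.den :=
      (padicNorm.nonneg _).lt_of_ne (padicNorm.nonzero (by exact_mod_cast q.den_nz)).symm
    rw [hnum, one_div, max_eq_left (one_le_inv₀ hpos |>.2 hden.le)]
  · rw [(padicNorm.nat_eq_one_iff q.den).2 hpq, div_one, inv_one,
      max_eq_right (padicNorm.of_int q.num)]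

theorem inv_padicNorm_natCast (p : ℕ) [hp : Fact p.Prime] {n : ℕ} (hn : n ≠ 0) :
    (padicNorm p n)⁻¹ = (p : ℚ) ^ n.factorization p := by
  rw [padicNorm.eq_zpow_of_nonzero (by exact_mod_cast hn), padicValRat.of_nat,
    ← Nat.factorization_def n hp.out, zpow_neg, inv_inv, zpow_natCast]

theorem log_max_padicNorm_one (p : ℕ) [Fact p.Prime] (q : ℚ) :
    Real.log (max (padicNorm p q : ℝ) 1) = q.den.factorization p * Real.log p := by
  have h := congrArg (fun r : ℚ ↦ (r : ℝ))
    ((padicNorm_max_one_eq_inv_padicNorm_den p q).trans (inv_padicNorm_natCast p q.den_nz))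
  push_cast at h
  rw [h, Real.log_pow]

theorem Rat.hasSum_log_max_padicNorm_one (q : ℚ) :
    HasSum (fun p : Nat.Primes ↦ Real.log (max (padicNorm p q : ℝ) 1)) (Real.log q.den) := by
  have hsum : HasSum (fun n : ℕ ↦ q.den.factorization n * Real.log n) (Real.log q.den) := by
    rw [Real.log_nat_eq_sum_factorization]
    exact hasSum_sum_of_ne_finset_zero fun n hn ↦ by
      rw [Finsupp.notMem_support_iff.1 hn, Nat.cast_zero, zero_mul]
  have hprime : ∀ n ∉ Set.range ((↑) : Nat.Primes → ℕ),
      (q.den.factorization n : ℝ) * Real.log n = 0 := fun n hn ↦ by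
    rw [Nat.factorization_eq_zero_of_not_prime _ fun hp ↦ hn ⟨⟨n, hp⟩, rfl⟩, Nat.cast_zero,
      zero_mul]
  refine ((Nat.Primes.coe_nat_injective.hasSum_iff hprime).2 hsum).congr_fun fun p ↦ ?_
  have := Fact.mk p.prop
  exact log_max_padicNorm_one p q

theorem Rat.log_max_abs_one_add_log_den (q : ℚ) :
    Real.log (max |(q : ℝ)| 1) + Real.log q.den = Real.log (max |(q.num : ℝ)| q.den) := by
  have hden : (0 : ℝ) < q.den := by exact_mod_cast q.pos
  rw [← Real.log_mul (by positivity) hden.ne', max_mul_of_nonneg _ _ hden.le, one_mul,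
    ← abs_of_pos hden, ← abs_mul, abs_of_pos hden]
  congr
  rw [Rat.cast_def, div_mul_cancel₀ _ hden.ne']

/-- a rational periodic point `Q = (x,y)` of `φ(x,y) = (y, x+y²+b)`
satisfies, at every place `v` of `ℚ`, `log⁺‖Q‖_v ≤ ½ log⁺|b|_v + log(3)_v`;
summing over all places gives `h(Q) ≤ ½ h(b) + log 3`. -/
theorem stmt7 (b : ℚ)
    (φ : ℚ × ℚ → ℚ × ℚ) (hφ : ∀ P, φ P = (P.2, P.1 + P.2 ^ 2 + b))
    (x y : ℚ) (N : ℕ) (hN : 1 ≤ N) (hper : φ^[N] (x, y) = (x, y))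
    (h : ℚ → ℝ) (hh : ∀ t : ℚ, h t = Real.log (max (|t.num| : ℝ) (t.den : ℝ))) :
    (∀ p : ℕ, p.Prime →
      Real.log (max ((padicNorm p x : ℝ)) (max ((padicNorm p y : ℝ)) 1)) ≤
        (1 / 2) * Real.log (max ((padicNorm p b : ℝ)) 1)) ∧
    (Real.log (max |(x : ℝ)| (max |(y : ℝ)| 1)) ≤
      (1 / 2) * Real.log (max |(b : ℝ)| 1) + Real.log 3) ∧
    (Real.log (max |(x : ℝ)| (max |(y : ℝ)| 1)) +
      (∑' q : Nat.Primes,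
        Real.log (max ((padicNorm (q : ℕ) x : ℝ)) (max ((padicNorm (q : ℕ) y : ℝ)) 1)))
      ≤ (1 / 2) * h b + Real.log 3) := by
  obtain rfl : φ = henon b := funext hφ
  have hfinite : ∀ p : ℕ, p.Prime →
      Real.log (max ((padicNorm p x : ℝ)) (max ((padicNorm p y : ℝ)) 1)) ≤
        (1 / 2) * Real.log (max ((padicNorm p b : ℝ)) 1) := fun p hp ↦ by
    have := Fact.mk hp
    simpa using log_max_abv_le_of_isNonarchimedean _
      (Rat.AbsoluteValue.isNonarchimedean_padic p) hper hN
  have hinfinite := log_max_abv_le Rat.AbsoluteValue.real hper hN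
  simp only [Rat.AbsoluteValue.real_eq_abs, Rat.cast_abs] at hinfinite
  refine ⟨hfinite, hinfinite, ?_⟩
  have hsum := (Rat.hasSum_log_max_padicNorm_one b).mul_left (1 / 2)
  have hle : (∑' q : Nat.Primes,
      Real.log (max ((padicNorm (q : ℕ) x : ℝ)) (max ((padicNorm (q : ℕ) y : ℝ)) 1))) ≤
      1 / 2 * Real.log b.den := by
    have hnonneg (q : Nat.Primes) :
        0 ≤ Real.log (max ((padicNorm (q : ℕ) x : ℝ)) (max ((padicNorm (q : ℕ) y : ℝ)) 1)) :=
      Real.log_nonneg (le_max_of_le_right (le_max_right _ _))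
    have hle_q (q : Nat.Primes) := hfinite q q.prop
    exact hasSum_le hle_q (hsum.summable.of_nonneg_of_le hnonneg hle_q).hasSum hsum
  rw [hh, ← Rat.log_max_abs_one_add_log_den]
  linarith
end

section
/- Let K be a field with a non-archimedean absolute value, f ∈ K[z] monic of degree d ≥ 2 splitting over K̄, and φ(x,y) = (y, x + f(y)). If P = (x,y) lies in the filled Julia set K_φ = {P : ‖φ^N(P)‖ bounded as N → ±∞}, then |f(x)| ≤ ρ(f) and |f(y)| ≤ ρ(f), and there exist roots ζ, ζ' of f with |y − ζ| ≤ 1 and |x − ζ'| ≤ 1. In particular, K_φ is contained in the union over Q ∈ Δ_f of the closed unit polydisks centered at Q. -/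
/-!
Fix a root `ζ₀` of `f`. Far from the roots the polynomial behaves like its leading term: if
`|z - ζ₀| > ρ`, every factor of `f z = ∏ (z - ζ)` has absolute value `|z - ζ₀|`, so
`|f z| = |z - ζ₀|^d`. Along an orbit `(zₙ, zₙ₊₁)` of `φ` we have `zₙ₊₁ - zₙ₋₁ = f(zₙ)`, so once
`|zₙ - ζ₀| > ρ` and `|zₙ₋₁ - ζ₀| < |zₙ - ζ₀|^d` the distances to `ζ₀` are raised to the `d`-th power
at every later step and the orbit escapes; the same holds backwards. Comparing `|zₙ - ζ₀|` with
`|zₙ₊₁ - ζ₀|` shows that one of the two escapes happens unless `|zₙ - ζ₀| ≤ ρ`. Hence every point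
of a bounded orbit lies within `ρ` of `ζ₀`, so `|f(zₙ)| = |zₙ₊₁ - zₙ₋₁| ≤ ρ`. Finally, if all roots
were at distance `> 1` from `z`, then `|f z|` would be a product of at least two factors `> 1`, one
of which is `≥ ρ` by the choice of `ρ`, so `|f z| > ρ`.
-/

open Polynomial

lemma IsNonarchimedean.apply_sub_le {F α : Type*} [AddGroup α] [FunLike F α ℝ]
    [AddGroupSeminormClass F α ℝ] {f : F} (hna : IsNonarchimedean f) (x y : α) :
    f (x - y) ≤ max (f x) (f y) := by
  simpa [sub_eq_add_neg] using hna x (-y)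

lemma Equiv.Perm.exists_zpow_apply_eq_iterate {α : Type*} (e : Equiv.Perm α) (P : α) (n : ℤ) :
    ∃ m : ℕ, (e ^ n) P = e^[m] P ∨ (e ^ n) P = e.symm^[m] P := by
  obtain ⟨m, rfl | rfl⟩ := Int.eq_nat_or_neg n
  · exact ⟨m, Or.inl (by rw [zpow_natCast, Equiv.Perm.iterate_eq_pow])⟩
  · refine ⟨m, Or.inr ?_⟩
    rw [zpow_neg, zpow_natCast, ← inv_pow, ← Equiv.Perm.iterate_eq_pow, Equiv.Perm.inv_def]

lemma Equiv.Perm.zpow_apply_fst_sub_zpow_apply_fst {α : Type*} [AddCommGroup α] (g : α → α)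
    (e : Equiv.Perm (α × α)) (he : ∀ P, e P = (P.2, P.1 + g P.2)) (P : α × α) (n : ℤ) :
    ((e ^ (n + 1)) P).1 - ((e ^ (n - 1)) P).1 = g ((e ^ n) P).1 := by
  have hsucc : ∀ m : ℤ, (e ^ (m + 1)) P = e ((e ^ m) P) := fun m => by
    rw [← mul_self_zpow, Equiv.Perm.mul_apply]
  have h₀ : (e ^ n) P = e ((e ^ (n - 1)) P) := by rw [← hsucc, sub_add_cancel]
  have h₁ : (e ^ (n + 1)) P = e (e ((e ^ (n - 1)) P)) := by rw [hsucc, h₀]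
  rw [h₁, h₀]
  simp [he]

section Henon

variable {K : Type*} [Field K] {v : AbsoluteValue K ℝ} {f : K[X]} {ρ : ℝ} {ζ₀ : K}

lemma abv_eval_eq_prod_roots (hmonic : f.Monic) (hsplit : f.Splits) (z : K) :
    v (f.eval z) = (f.roots.map fun ζ => v (z - ζ)).prod := by
  conv_lhs => rw [hsplit.eq_prod_roots_of_monic hmonic]
  simp [eval_multiset_prod, map_multiset_prod, Multiset.map_map]

variable (hna : IsNonarchimedean v) (hmonic : f.Monic) (hsplit : f.Splits)
  (hρ : ∀ ζ₁ ζ₂ : K, f.eval ζ₁ = 0 → f.eval ζ₂ = 0 → v (ζ₁ - ζ₂) ≤ ρ)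
include hna hmonic hsplit hρ

lemma abv_eval_eq_pow_of_lt (hζ₀ : f.eval ζ₀ = 0) {z : K} (hz : ρ < v (z - ζ₀)) :
    v (f.eval z) = v (z - ζ₀) ^ f.natDegree := by
  have hfactor : ∀ ζ ∈ f.roots, v (z - ζ) = v (z - ζ₀) := fun ζ hζ => by
    have hlt : v (ζ₀ - ζ) < v (z - ζ₀) := (hρ ζ₀ ζ hζ₀ (isRoot_of_mem_roots hζ)).trans_lt hz
    rw [show z - ζ = (z - ζ₀) + (ζ₀ - ζ) by ring, hna.add_eq_left_of_lt hlt]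
  rw [abv_eval_eq_prod_roots hmonic hsplit, Multiset.map_congr rfl hfactor, Multiset.map_const',
    Multiset.prod_replicate, splits_iff_card_roots.mp hsplit]

lemma abv_sub_eq_pow_of_escaping (hζ₀ : f.eval ζ₀ = 0) {a b c : K}
    (hc : v (c - a) = v (f.eval b)) (hb : ρ < v (b - ζ₀))
    (ha : v (a - ζ₀) < v (b - ζ₀) ^ f.natDegree) :
    v (c - ζ₀) = v (b - ζ₀) ^ f.natDegree := by
  have hfb := abv_eval_eq_pow_of_lt hna hmonic hsplit hρ hζ₀ hb
  rw [show c - ζ₀ = (c - a) + (a - ζ₀) by ring, hna.add_eq_left_of_lt (by rwa [hc, hfb]), hc, hfb]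

lemma not_bddAbove_of_escaping (hd : 2 ≤ f.natDegree) (hρ1 : 1 ≤ ρ) (hζ₀ : f.eval ζ₀ = 0)
    {w : ℕ → K} (hw : ∀ k, v (w (k + 2) - w k) = v (f.eval (w (k + 1))))
    (h1 : ρ < v (w 1 - ζ₀)) (h0 : v (w 0 - ζ₀) < v (w 1 - ζ₀) ^ f.natDegree) :
    ¬ BddAbove (Set.range fun k => v (w k - ζ₀)) := by
  set t := v (w 1 - ζ₀)
  have ht : 1 < t := hρ1.trans_lt h1
  have hgrow : ∀ k, ρ < v (w (k + 1) - ζ₀) ∧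
      v (w k - ζ₀) < v (w (k + 1) - ζ₀) ^ f.natDegree ∧ t ^ (k + 1) ≤ v (w (k + 1) - ζ₀) := by
    intro k
    induction k with
    | zero => exact ⟨h1, h0, by simp [t]⟩
    | succ k ih =>
      obtain ⟨hfar, hnear, hpow⟩ := ih
      set u := v (w (k + 1) - ζ₀)
      have hu : 1 < u := hρ1.trans_lt hfar
      have hlt : u < u ^ f.natDegree := lt_self_pow₀ hu hd
      have hnext : v (w (k + 2) - ζ₀) = u ^ f.natDegree :=
        abv_sub_eq_pow_of_escaping hna hmonic hsplit hρ hζ₀ (hw k) hfar hnear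
      have htu : t ≤ u := (le_self_pow₀ ht.le (by omega)).trans hpow
      refine ⟨by rw [hnext]; linarith, ?_, ?_⟩
      · rw [hnext]
        exact hlt.trans_le (le_self_pow₀ (one_le_pow₀ hu.le) (by omega))
      · rw [hnext]
        calc t ^ (k + 1 + 1) = t ^ (k + 1) * t := pow_succ _ _
          _ ≤ u * u := by gcongr
          _ = u ^ 2 := (sq u).symm
          _ ≤ u ^ f.natDegree := pow_le_pow_right₀ hu.le hd
  rintro ⟨B, hB⟩
  obtain ⟨m, hm⟩ := pow_unbounded_of_one_lt B ht
  have hbound : v (w (m + 1) - ζ₀) ≤ B := hB ⟨m + 1, rfl⟩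
  linarith [(hgrow m).2.2, pow_le_pow_right₀ ht.le (by omega : m ≤ m + 1)]

lemma abv_sub_root_le_of_bddAbove (hd : 2 ≤ f.natDegree) (hρ1 : 1 ≤ ρ) (hζ₀ : f.eval ζ₀ = 0)
    {z : ℤ → K} (hz : ∀ n, z (n + 1) - z (n - 1) = f.eval (z n))
    (hbdd : BddAbove (Set.range fun n => v (z n))) (n : ℤ) :
    v (z n - ζ₀) ≤ ρ := by
  obtain ⟨B, hB⟩ := hbdd
  have hbdd' : BddAbove (Set.range fun n => v (z n - ζ₀)) := by
    refine ⟨max B (v ζ₀), Set.forall_mem_range.2 fun n => ?_⟩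
    exact (hna.apply_sub_le _ _).trans (max_le_max_right _ (hB ⟨n, rfl⟩))
  have hsub : ∀ w : ℕ → ℤ, BddAbove (Set.range fun k => v (z (w k) - ζ₀)) := fun w =>
    hbdd'.mono (Set.range_subset_iff.2 fun k => Set.mem_range_self (w k))
  have hfwd := not_bddAbove_of_escaping hna hmonic hsplit hρ hd hρ1 hζ₀
    (w := fun k => z (n + k)) (fun k => by
      rw [← hz]; congr 3 <;> push_cast <;> ring)
  have hbwd := not_bddAbove_of_escaping hna hmonic hsplit hρ hd hρ1 hζ₀
    (w := fun k => z (n + 1 - k)) (fun k => by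
      rw [← v.map_neg, ← hz, neg_sub]; congr 3 <;> push_cast <;> ring)
  simp only [Nat.cast_zero, Nat.cast_one, add_zero, add_sub_cancel_right, sub_zero] at hfwd hbwd
  by_contra! hn
  rcases le_or_gt (v (z n - ζ₀)) (v (z (n + 1) - ζ₀)) with hle | hlt
  · have hfar := hn.trans_le hle
    exact hfwd hfar (hle.trans_lt (lt_self_pow₀ (hρ1.trans_lt hfar) hd)) (hsub _)
  · exact hbwd hn (hlt.trans (lt_self_pow₀ (hρ1.trans_lt hn) hd)) (hsub _)

lemma abv_eval_le_of_bddAbove (hd : 2 ≤ f.natDegree) (hρ1 : 1 ≤ ρ)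
    {z : ℤ → K} (hz : ∀ n, z (n + 1) - z (n - 1) = f.eval (z n))
    (hbdd : BddAbove (Set.range fun n => v (z n))) (n : ℤ) :
    v (f.eval (z n)) ≤ ρ := by
  obtain ⟨ζ₀, hζ₀⟩ := hsplit.exists_eval_eq_zero
    (by rw [degree_eq_natDegree hmonic.ne_zero]; exact_mod_cast (by omega : f.natDegree ≠ 0))
  have hclose := abv_sub_root_le_of_bddAbove hna hmonic hsplit hρ hd hρ1 hζ₀ hz hbdd
  rw [← hz, show z (n + 1) - z (n - 1) = (z (n + 1) - ζ₀) - (z (n - 1) - ζ₀) by ring]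
  exact (hna.apply_sub_le _ _).trans (max_le (hclose _) (hclose _))

omit hρ in
lemma exists_root_abv_sub_le_one_of_abv_eval_le (hd : 2 ≤ f.natDegree) (hρ1 : 1 ≤ ρ)
    (hρ_attained : ρ = 1 ∨ ∃ ζ₁ ζ₂ : K, f.eval ζ₁ = 0 ∧ f.eval ζ₂ = 0 ∧ v (ζ₁ - ζ₂) = ρ)
    {z : K} (hz : v (f.eval z) ≤ ρ) :
    ∃ ζ : K, f.eval ζ = 0 ∧ v (z - ζ) ≤ 1 := by
  by_contra! hfar
  have hcard : f.roots.card = f.natDegree := splits_iff_card_roots.mp hsplit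
  have hroot : ∀ {ζ}, ζ ∈ f.roots ↔ f.eval ζ = 0 := mem_roots hmonic.ne_zero
  obtain ⟨ζ, hζ, hρζ⟩ : ∃ ζ ∈ f.roots, ρ ≤ v (z - ζ) := by
    rcases hρ_attained with rfl | ⟨ζ₁, ζ₂, h₁, h₂, hdist⟩
    · obtain ⟨ζ, hζ⟩ := Multiset.card_pos_iff_exists_mem.mp (by omega : 0 < f.roots.card)
      exact ⟨ζ, hζ, (hfar ζ (hroot.mp hζ)).le⟩
    · have : ρ ≤ max (v (z - ζ₂)) (v (z - ζ₁)) := by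
        rw [← hdist, show ζ₁ - ζ₂ = (z - ζ₂) - (z - ζ₁) by ring]
        exact hna.apply_sub_le _ _
      rcases le_max_iff.mp this with h | h
      exacts [⟨ζ₂, hroot.mpr h₂, h⟩, ⟨ζ₁, hroot.mpr h₁, h⟩]
  obtain ⟨rest, hrest⟩ := Multiset.exists_cons_of_mem hζ
  have hrest_ne : rest ≠ 0 := by
    rintro rfl
    rw [hrest, Multiset.card_cons, Multiset.card_zero] at hcard
    omega
  have hrest_prod : 1 < (rest.map fun ζ => v (z - ζ)).prod := by
    simpa using Multiset.prod_map_lt_prod_map hrest_ne (fun _ => 1) (fun ζ => v (z - ζ))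
      (fun _ _ => one_pos) (fun ζ' hζ' => hfar ζ' (hroot.mp (hrest ▸ Multiset.mem_cons_of_mem hζ')))
  have : ρ < v (f.eval z) := by
    rw [abv_eval_eq_prod_roots hmonic hsplit, hrest, Multiset.map_cons, Multiset.prod_cons]
    calc ρ = ρ * 1 := (mul_one ρ).symm
      _ < v (z - ζ) * (rest.map fun ζ => v (z - ζ)).prod :=
        mul_lt_mul' hρζ hrest_prod zero_le_one (by linarith)
  linarith

end Henon

/-- every point `P = (x,y)` of the filled Julia set of the Hénon map
`φ(x,y) = (y, x+f(y))` satisfies `|f(x)|, |f(y)| ≤ ρ(f)`, and both coordinates are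
within distance 1 of roots of `f`; hence the filled Julia set lies in the union of
unit polydisks centered at points of `Δ_f`. -/
theorem stmt9 {K : Type*} [Field K] (v : AbsoluteValue K ℝ)
    (hna : IsNonarchimedean v) (d : ℕ) (hd : 2 ≤ d)
    (f : K[X]) (hmonic : f.Monic) (hdeg : f.natDegree = d)
    (hsplit : f.Splits)
    (ρ : ℝ) (hρ1 : 1 ≤ ρ)
    (hρ2 : ∀ ζ₁ ζ₂ : K, f.eval ζ₁ = 0 → f.eval ζ₂ = 0 → v (ζ₁ - ζ₂) ≤ ρ)
    (hρ3 : ρ = 1 ∨ ∃ ζ₁ ζ₂ : K, f.eval ζ₁ = 0 ∧ f.eval ζ₂ = 0 ∧ v (ζ₁ - ζ₂) = ρ)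
    (φ φi : K × K → K × K)
    (hφ : ∀ P, φ P = (P.2, P.1 + f.eval P.2))
    (hφi : ∀ P, φi P = (P.2 - f.eval P.1, P.1))
    (P : K × K)
    (hbdd : ∃ C : ℝ, ∀ N : ℕ,
      max (v (φ^[N] P).1) (v (φ^[N] P).2) ≤ C ∧
      max (v (φi^[N] P).1) (v (φi^[N] P).2) ≤ C) :
    v (f.eval P.1) ≤ ρ ∧ v (f.eval P.2) ≤ ρ ∧
    ∃ ζ ζ' : K, f.eval ζ = 0 ∧ f.eval ζ' = 0 ∧
      v (P.2 - ζ) ≤ 1 ∧ v (P.1 - ζ') ≤ 1 := by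
  subst hdeg
  obtain ⟨C, hC⟩ := hbdd
  let e : Equiv.Perm (K × K) := ⟨φ, φi, fun Q => by simp [hφ, hφi], fun Q => by simp [hφ, hφi]⟩
  let z : ℤ → K := fun n => ((e ^ n) P).1
  have hz : ∀ n, z (n + 1) - z (n - 1) = f.eval (z n) :=
    e.zpow_apply_fst_sub_zpow_apply_fst f.eval hφ P
  have hzbdd : BddAbove (Set.range fun n => v (z n)) := by
    refine ⟨C, Set.forall_mem_range.2 fun n => ?_⟩
    obtain ⟨m, h | h⟩ := e.exists_zpow_apply_eq_iterate P n
    · exact (le_max_left _ _).trans (h ▸ (hC m).1)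
    · exact (le_max_left _ _).trans (h ▸ (hC m).2)
  have hfz := abv_eval_le_of_bddAbove hna hmonic hsplit hρ2 hd hρ1 hz hzbdd
  have hfx : v (f.eval P.1) ≤ ρ := by simpa [z] using hfz 0
  have hfy : v (f.eval P.2) ≤ ρ := by simpa [z, e, hφ] using hfz 1
  obtain ⟨ζ, hζ, hyζ⟩ :=
    exists_root_abv_sub_le_one_of_abv_eval_le hna hmonic hsplit hd hρ1 hρ3 hfy
  obtain ⟨ζ', hζ', hxζ'⟩ :=
    exists_root_abv_sub_le_one_of_abv_eval_le hna hmonic hsplit hd hρ1 hρ3 hfx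
  exact ⟨hfx, hfy, ζ, ζ', hζ, hζ', hyζ, hxζ'⟩
end

section
/- Let K be a field with a non-archimedean absolute value, let g(z) ∈ K̄[z] be monic of degree d with ρ(g) > 1, where ρ(g) = max over roots ζ₁, ζ₂ of g of max(|ζ₁ − ζ₂|, 1). Then for every c ∈ K̄ with |c| ≤ ρ(g), one has ρ(g + c) = ρ(g). -/
/-!
For monic split `f` of degree `n`, `|f(x)|` is the product of the distances from `x` to the
roots of `f`, so some root lies within `|f(x)| ^ (1 / n)` of `x`. A root `γ` of `g + c` has
`|g(γ)| = |c| ≤ ρ ≤ ρ ^ d`, so it lies within `ρ` of a root of `g`; by the ultrametric inequality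
`ρ(g + c) ≤ ρ(g)`. Conversely, `d ≥ 2` since `g` has two roots at distance `ρ > 1`, and a root `ζ`
of `g` has `|(g + c)(ζ)| = |c| ≤ ρ < ρ ^ d`, so it lies strictly within `ρ` of a root of `g + c`.
Moving both ends of a segment of length `ρ` by less than `ρ` does not change its length, so
`ρ(g + c) ≥ ρ(g)`.
-/

open Polynomial

namespace IsNonarchimedean

variable {F α : Type*} [AddCommGroup α] [FunLike F α ℝ] [AddGroupSeminormClass F α ℝ] {f : F}
  {x x' y y' : α} {r : ℝ}

theorem apply_sub_le_of_le (hna : IsNonarchimedean f) (hx : f (x - x') ≤ r)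
    (hy : f (y - y') ≤ r) (hxy : f (x' - y') ≤ r) : f (x - y) ≤ r := by
  rw [← sub_add_sub_cancel x x' y, ← sub_add_sub_cancel x' y' y]
  refine (hna _ _).trans (max_le hx <| (hna _ _).trans (max_le hxy ?_))
  rwa [map_sub_rev]

theorem apply_sub_eq_of_lt (hna : IsNonarchimedean f) (hx : f (x - x') < r)
    (hy : f (y - y') < r) (hxy : f (x - y) = r) : f (x' - y') = r := by
  have hsmall : f ((x' - x) + (y - y')) < f (x - y) :=
    hxy ▸ (hna _ _).trans_lt (max_lt (by rwa [map_sub_rev]) hy)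
  rw [show x' - y' = (x - y) + ((x' - x) + (y - y')) by abel, hna.add_eq_left_of_lt hsmall, hxy]

end IsNonarchimedean

namespace Polynomial

variable {K : Type*} [Field K] (v : AbsoluteValue K ℝ)

theorem two_le_natDegree_of_isRoot_of_ne {R : Type*} [CommRing R] [IsDomain R] {p : R[X]}
    (hp : p ≠ 0) {a b : R} (ha : p.IsRoot a) (hb : p.IsRoot b) (hab : a ≠ b) :
    2 ≤ p.natDegree := by
  classical
  have hsub : ({a, b} : Finset R) ⊆ p.roots.toFinset := by
    simpa [Finset.insert_subset_iff, hp] using ⟨ha, hb⟩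
  calc 2 = ({a, b} : Finset R).card := (Finset.card_pair hab).symm
    _ ≤ p.roots.toFinset.card := Finset.card_le_card hsub
    _ ≤ Multiset.card p.roots := Multiset.toFinset_card_le _
    _ ≤ p.natDegree := p.card_roots'

theorem Splits.exists_mem_roots_pow_le {f : K[X]} (hf : f.Splits) (hm : f.Monic)
    (hdeg : f.natDegree ≠ 0) (x : K) :
    ∃ ζ ∈ f.roots, v (x - ζ) ^ f.natDegree ≤ v (f.eval x) := by
  classical
  have hcard := hf.natDegree_eq_card_roots
  have hne : f.roots.toFinset.Nonempty := by
    rw [Multiset.toFinset_nonempty, ← Multiset.card_pos, ← hcard]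
    exact Nat.pos_of_ne_zero hdeg
  obtain ⟨ζ, hζ, hmin⟩ := f.roots.toFinset.exists_min_image (fun η => v (x - η)) hne
  refine ⟨ζ, Multiset.mem_toFinset.mp hζ, ?_⟩
  calc v (x - ζ) ^ f.natDegree = (f.roots.map fun _ => v (x - ζ)).prod := by
        rw [Multiset.map_const', Multiset.prod_replicate, hcard]
    _ ≤ (f.roots.map fun η => v (x - η)).prod :=
        Multiset.prod_map_le_prod_map₀ _ _ (fun _ _ => v.nonneg _)
          fun η hη => hmin η (Multiset.mem_toFinset.mpr hη)
    _ = v (f.eval x) := by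
        rw [hf.eval_eq_prod_roots_of_monic hm, map_multiset_prod, Multiset.map_map]
        rfl

theorem Splits.exists_isRoot_sub_le {f : K[X]} (hf : f.Splits) (hm : f.Monic)
    (hdeg : f.natDegree ≠ 0) {x : K} {r : ℝ} (hr : 0 ≤ r) (h : v (f.eval x) ≤ r ^ f.natDegree) :
    ∃ ζ, f.IsRoot ζ ∧ v (x - ζ) ≤ r := by
  obtain ⟨ζ, hζ, hpow⟩ := hf.exists_mem_roots_pow_le v hm hdeg x
  exact ⟨ζ, isRoot_of_mem_roots hζ, (pow_le_pow_iff_left₀ (v.nonneg _) hr hdeg).mp (hpow.trans h)⟩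

theorem Splits.exists_isRoot_sub_lt {f : K[X]} (hf : f.Splits) (hm : f.Monic)
    (hdeg : f.natDegree ≠ 0) {x : K} {r : ℝ} (hr : 0 ≤ r) (h : v (f.eval x) < r ^ f.natDegree) :
    ∃ ζ, f.IsRoot ζ ∧ v (x - ζ) < r := by
  obtain ⟨ζ, hζ, hpow⟩ := hf.exists_mem_roots_pow_le v hm hdeg x
  exact ⟨ζ, isRoot_of_mem_roots hζ, (pow_lt_pow_iff_left₀ (v.nonneg _) hr hdeg).mp (hpow.trans_lt h)⟩

theorem exists_isRoot_sub_le_of_isRoot_add_C {g : K[X]} (hg : g.Splits) (hm : g.Monic)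
    (hdeg : g.natDegree ≠ 0) {r : ℝ} (hr : 1 ≤ r) {c : K} (hc : v c ≤ r) {γ : K}
    (hγ : (g + C c).IsRoot γ) : ∃ ζ, g.IsRoot ζ ∧ v (γ - ζ) ≤ r := by
  have hgγ : g.eval γ = -c := eq_neg_of_add_eq_zero_left (by simpa using hγ)
  refine hg.exists_isRoot_sub_le v hm hdeg (zero_le_one.trans hr) ?_
  rw [hgγ, v.map_neg]
  exact hc.trans (le_self_pow₀ hr hdeg)

theorem exists_isRoot_add_C_sub_lt_of_isRoot {g : K[X]} {c : K} (hg : (g + C c).Splits)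
    (hm : g.Monic) (hdeg : 2 ≤ g.natDegree) {r : ℝ} (hr : 1 < r) (hc : v c ≤ r) {ζ : K}
    (hζ : g.IsRoot ζ) : ∃ γ, (g + C c).IsRoot γ ∧ v (ζ - γ) < r := by
  have hdeg' : (g + C c).natDegree = g.natDegree := natDegree_add_C
  have hm' : (g + C c).Monic := hm.add_of_left <| degree_C_le.trans_lt <| by
    rw [degree_eq_natDegree hm.ne_zero]
    exact_mod_cast (by omega : 0 < g.natDegree)
  refine hg.exists_isRoot_sub_lt v hm' (by omega) (zero_le_one.trans hr.le) ?_
  rw [eval_add, eval_C, hζ.eq_zero, zero_add, hdeg']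
  exact hc.trans_lt (lt_self_pow₀ hr (by omega))

end Polynomial

theorem stmt10_general {K : Type*} [Field K] [IsAlgClosed K] (v : AbsoluteValue K ℝ)
    (hna : IsNonarchimedean v)
    (g : K[X]) (hmonic : g.Monic)
    (ρ : ℝ)
    (hρ2 : ∀ ζ₁ ζ₂ : K, g.eval ζ₁ = 0 → g.eval ζ₂ = 0 → v (ζ₁ - ζ₂) ≤ ρ)
    (hρ3 : ρ = 1 ∨ ∃ ζ₁ ζ₂ : K, g.eval ζ₁ = 0 ∧ g.eval ζ₂ = 0 ∧ v (ζ₁ - ζ₂) = ρ)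
    (hρ : 1 < ρ)
    (c : K) (hc : v c ≤ ρ)
    (ρ' : ℝ)
    (hρ'2 : ∀ ζ₁ ζ₂ : K, (g + C c).eval ζ₁ = 0 → (g + C c).eval ζ₂ = 0 →
      v (ζ₁ - ζ₂) ≤ ρ')
    (hρ'3 : ρ' = 1 ∨ ∃ ζ₁ ζ₂ : K, (g + C c).eval ζ₁ = 0 ∧ (g + C c).eval ζ₂ = 0 ∧
      v (ζ₁ - ζ₂) = ρ') :
    ρ' = ρ := by
  obtain ⟨α, β, hα, hβ, hαβ⟩ := hρ3.resolve_left hρ.ne'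
  have hαβ_ne : α ≠ β := fun h => by simp [h] at hαβ; linarith
  have hdeg : 2 ≤ g.natDegree := two_le_natDegree_of_isRoot_of_ne hmonic.ne_zero hα hβ hαβ_ne
  refine le_antisymm ?_ ?_
  · rcases hρ'3 with rfl | ⟨γ₁, γ₂, hγ₁, hγ₂, rfl⟩
    · exact hρ.le
    obtain ⟨ζ₁, hζ₁, h₁⟩ := exists_isRoot_sub_le_of_isRoot_add_C v (IsAlgClosed.splits g) hmonic
      (by omega) hρ.le hc hγ₁
    obtain ⟨ζ₂, hζ₂, h₂⟩ := exists_isRoot_sub_le_of_isRoot_add_C v (IsAlgClosed.splits g) hmonic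
      (by omega) hρ.le hc hγ₂
    exact hna.apply_sub_le_of_le h₁ h₂ (hρ2 _ _ hζ₁ hζ₂)
  · obtain ⟨γ₁, hγ₁, h₁⟩ := exists_isRoot_add_C_sub_lt_of_isRoot v (IsAlgClosed.splits _) hmonic
      hdeg hρ hc hα
    obtain ⟨γ₂, hγ₂, h₂⟩ := exists_isRoot_add_C_sub_lt_of_isRoot v (IsAlgClosed.splits _) hmonic
      hdeg hρ hc hβ
    exact (hna.apply_sub_eq_of_lt h₁ h₂ hαβ).symm.le.trans (hρ'2 _ _ hγ₁ hγ₂)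

/-- for a monic polynomial `g` over an algebraically closed field
with a non-archimedean absolute value, if `ρ(g) > 1` then for any `c` with
`|c| ≤ ρ(g)` one has `ρ(g + c) = ρ(g)`. -/
theorem stmt10 {K : Type*} [Field K] [IsAlgClosed K] (v : AbsoluteValue K ℝ)
    (hna : IsNonarchimedean v)
    (d : ℕ) (g : K[X]) (hmonic : g.Monic) (hdeg : g.natDegree = d)
    (ρ : ℝ)
    (hρ2 : ∀ ζ₁ ζ₂ : K, g.eval ζ₁ = 0 → g.eval ζ₂ = 0 → v (ζ₁ - ζ₂) ≤ ρ)
    (hρ3 : ρ = 1 ∨ ∃ ζ₁ ζ₂ : K, g.eval ζ₁ = 0 ∧ g.eval ζ₂ = 0 ∧ v (ζ₁ - ζ₂) = ρ)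
    (hρ : 1 < ρ)
    (c : K) (hc : v c ≤ ρ)
    (ρ' : ℝ) (hρ'1 : 1 ≤ ρ')
    (hρ'2 : ∀ ζ₁ ζ₂ : K, (g + C c).eval ζ₁ = 0 → (g + C c).eval ζ₂ = 0 →
      v (ζ₁ - ζ₂) ≤ ρ')
    (hρ'3 : ρ' = 1 ∨ ∃ ζ₁ ζ₂ : K, (g + C c).eval ζ₁ = 0 ∧ (g + C c).eval ζ₂ = 0 ∧
      v (ζ₁ - ζ₂) = ρ') :
    ρ' = ρ :=
  stmt10_general v hna g hmonic ρ hρ2 hρ3 hρ c hc ρ' hρ'2 hρ'3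
end

section
/- Let F be a field equipped with a family of non-trivial non-archimedean absolute values |·|_v (v ∈ M_F) satisfying a product formula, with field of constants K̄ = {α ∈ F̄ : |α|_v ≤ 1 for all extensions of all v}. Let f ∈ F[z] be monic of degree d ≥ 2. If ρ_v(f) = 1 for all v ∈ M_F (where ρ_v(f) = max over roots ζ₁, ζ₂ of f of max(|ζ₁ − ζ₂|_v, 1)), then there exists α ∈ F̄ such that f(z + α) has all coefficients in K̄. -/
/-!
Centre `f` at one of its roots `α`: then `f(z + α) = ∏ (z - (ζ - α))` over the roots `ζ`, and each
factor has coefficients of absolute value at most `1` at every place by hypothesis. By the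
ultrametric inequality such polynomials are closed under multiplication. The extended absolute
values are ultrametric because ultrametricity only depends on the values on `ℕ`, where they agree
with the original ones.
-/

open Polynomial

namespace AbsoluteValue

variable {K : Type*} [Field K] {w : AbsoluteValue K ℝ}

theorem isNonarchimedean_of_forall_natCast_le_one (h : ∀ n : ℕ, w n ≤ 1) :
    IsNonarchimedean w := by
  let := w.toNormedField
  have := IsUltrametricDist.isUltrametricDist_of_forall_norm_natCast_le_one (R := K) h
  exact IsUltrametricDist.norm_add_le_max

theorem isNonarchimedean_of_comp_algebraMap {F : Type*} [CommSemiring F] [Nontrivial F]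
    [Algebra F K] {v : AbsoluteValue F ℝ} (hv : IsNonarchimedean v)
    (hw : ∀ x, w (algebraMap F K x) = v x) :
    IsNonarchimedean w :=
  isNonarchimedean_of_forall_natCast_le_one fun n => by
    rw [← map_natCast (algebraMap F K), hw]
    exact hv.apply_natCast_le_one

end AbsoluteValue

namespace Polynomial

variable {R : Type*} [CommRing R] {w : AbsoluteValue R ℝ}

theorem coeff_mul_le_one (hna : IsNonarchimedean w) {p q : R[X]}
    (hp : ∀ n, w (p.coeff n) ≤ 1) (hq : ∀ n, w (q.coeff n) ≤ 1) (n : ℕ) :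
    w ((p * q).coeff n) ≤ 1 := by
  rw [coeff_mul]
  obtain ⟨ij, -, hij⟩ :=
    hna.finset_image_add_of_nonempty (fun ij => p.coeff ij.1 * q.coeff ij.2)
      ⟨(0, n), Finset.HasAntidiagonal.mem_antidiagonal.mpr (zero_add n)⟩
  exact hij.trans <| by
    rw [map_mul]
    exact mul_le_one₀ (hp _) (w.nonneg _) (hq _)

theorem coeff_X_sub_C_le_one [Nontrivial R] (hna : IsNonarchimedean w) {r : R} (hr : w r ≤ 1)
    (n : ℕ) : w ((X - C r).coeff n) ≤ 1 := by
  rw [sub_eq_add_neg, ← C_neg, coeff_add, coeff_X, coeff_C]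
  refine (hna _ _).trans (max_le ?_ ?_) <;> split_ifs <;> simp [hr]

theorem coeff_multiset_prod_X_sub_C_le_one [Nontrivial R] (hna : IsNonarchimedean w)
    {s : Multiset R} (hs : ∀ r ∈ s, w r ≤ 1) (n : ℕ) :
    w ((s.map fun r => X - C r).prod.coeff n) ≤ 1 := by
  refine Multiset.prod_induction (fun p : R[X] => ∀ n, w (p.coeff n) ≤ 1) _
    (fun p q hp hq => coeff_mul_le_one hna hp hq) (fun n => ?_) ?_ n
  · rw [coeff_one]
    split_ifs <;> simp
  · simp only [Multiset.mem_map]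
    rintro - ⟨r, hr, rfl⟩
    exact coeff_X_sub_C_le_one hna (hs r hr)

theorem coeff_comp_X_add_C_le_one [IsDomain R] (hna : IsNonarchimedean w) {p : R[X]}
    (hmonic : p.Monic) (hsplit : p.Splits) {α : R} (hα : ∀ ζ ∈ p.roots, w (ζ - α) ≤ 1)
    (n : ℕ) : w ((p.comp (X + C α)).coeff n) ≤ 1 := by
  have hq_monic := hmonic.comp_X_add_C α
  rw [(hsplit.comp_X_add_C α).eq_prod_roots_of_monic hq_monic]
  refine coeff_multiset_prod_X_sub_C_le_one hna (fun r hr => ?_) n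
  have hroot : p.eval (r + α) = 0 := by
    simpa [eval_comp] using (mem_roots hq_monic.ne_zero).mp hr
  simpa using hα (r + α) ((mem_roots hmonic.ne_zero).mpr hroot)

end Polynomial

theorem stmt11_general {F : Type*} [Field F] {ι : Type*}
    (v : ι → AbsoluteValue F ℝ) (hna : ∀ i, IsNonarchimedean (v i))
    {L : Type*} [Field L] [Algebra F L] [IsAlgClosure F L]
    (w : ι → AbsoluteValue L ℝ)
    (hw : ∀ (i) (x : F), w i (algebraMap F L x) = v i x)
    (f : F[X]) (hmonic : f.Monic)
    (hρ : ∀ (i) (ζ₁ ζ₂ : L), (f.map (algebraMap F L)).eval ζ₁ = 0 →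
      (f.map (algebraMap F L)).eval ζ₂ = 0 → w i (ζ₁ - ζ₂) ≤ 1) :
    ∃ α : L, ∀ (n : ℕ) (i : ι),
      w i (((f.map (algebraMap F L)).comp (X + C α)).coeff n) ≤ 1 := by
  have := IsAlgClosure.isAlgClosed F (K := L)
  set g := f.map (algebraMap F L)
  have hg : g.Monic := hmonic.map _
  obtain ⟨α, hα⟩ : ∃ α : L, ∀ i, ∀ ζ ∈ g.roots, w i (ζ - α) ≤ 1 := by
    rcases Multiset.empty_or_exists_mem g.roots with hempty | ⟨α, hα⟩
    · exact ⟨0, fun i ζ hζ => by simp [hempty] at hζ⟩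
    · refine ⟨α, fun i ζ hζ => hρ i ζ α ?_ ?_⟩
      · exact (mem_roots hg.ne_zero).mp hζ
      · exact (mem_roots hg.ne_zero).mp hα
  have hwna i : IsNonarchimedean (w i) := (w i).isNonarchimedean_of_comp_algebraMap (hna i) (hw i)
  exact ⟨α, fun n i => coeff_comp_X_add_C_le_one (hwna i) hg (IsAlgClosed.splits g) (hα i) n⟩

/-- over a function field `F` (product formula field with
non-archimedean places), if `ρ_v(f) = 1` for all places `v` (all roots of `f` are
at mutual distance ≤ 1 at every place of the algebraic closure), then some
translate `f(z + α)` has all coefficients in the constant field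
`{α : |α|_w ≤ 1 for all w}`. -/
theorem stmt11 {F : Type*} [Field F] {ι : Type*}
    (v : ι → AbsoluteValue F ℝ) (hna : ∀ i, IsNonarchimedean (v i))
    (hnontriv : ∀ i, ∃ x : F, x ≠ 0 ∧ v i x ≠ 1)
    (hprod : ∀ x : F, x ≠ 0 →
      (Function.mulSupport fun i => v i x).Finite ∧ ∏ᶠ i, v i x = 1)
    {L : Type*} [Field L] [Algebra F L] [IsAlgClosure F L]
    (w : ι → AbsoluteValue L ℝ)
    (hw : ∀ (i) (x : F), w i (algebraMap F L x) = v i x)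
    (d : ℕ) (hd : 2 ≤ d) (f : F[X]) (hmonic : f.Monic) (hdeg : f.natDegree = d)
    (hρ : ∀ (i) (ζ₁ ζ₂ : L), (f.map (algebraMap F L)).eval ζ₁ = 0 →
      (f.map (algebraMap F L)).eval ζ₂ = 0 → w i (ζ₁ - ζ₂) ≤ 1) :
    ∃ α : L, ∀ (n : ℕ) (i : ι),
      w i (((f.map (algebraMap F L)).comp (X + C α)).coeff n) ≤ 1 :=
  stmt11_general v hna w hw f hmonic hρ
end

section
/- Let φ(x,y) = (y, x + y² + b) over a field K with a non-archimedean absolute value, and suppose |b| ≤ 1. Define local canonical heights λ⁺(P) = lim_{N→∞} 2^{-N} log⁺‖φ^N(P)‖ and λ⁻(P) = lim_{N→∞} 2^{-N} log⁺‖φ^{-N}(P)‖ (these limits exist). Then for any P ∈ K² and any M ≥ 1, writing φ^j(P) = (x_j, y_j) for −M ≤ j ≤ M, one has for all i, j ∈ [−M, M]: log|x_i − x_j| ≤ 2^{M+1}(λ⁺(P) + λ⁻(P)) and log|y_i − y_j| ≤ 2^{M+1}(λ⁺(P) + λ⁻(P)). -/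
open Filter

section Aux

variable {K : Type*} [Field K] (v : AbsoluteValue K ℝ)

/-- Local height `log⁺ ‖R‖`. -/
noncomputable def ghAux (R : K × K) : ℝ := Real.log (max (max (v R.1) (v R.2)) 1)

lemma ghAux_nonneg (R : K × K) : 0 ≤ ghAux v R :=
  Real.log_nonneg (le_max_right _ _)

variable {v}

lemma na_sub (hna : IsNonarchimedean v) (a c : K) : v (a - c) ≤ max (v a) (v c) := by
  have := hna a (-c)
  simpa [sub_eq_add_neg, v.map_neg] using this

lemma na_add_eq (hna : IsNonarchimedean v) {a c : K} (h : v c < v a) :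
    v (a + c) = v a := by
  refine le_antisymm ((hna a c).trans (max_le le_rfl h.le)) ?_
  have h2 : v a ≤ max (v (a + c)) (v c) := by
    have := hna (a + c) (-c)
    simpa [v.map_neg] using this
  rcases le_max_iff.mp h2 with h3 | h3
  · exact h3
  · exact absurd h3 (not_le.mpr h)

lemma log_le_of_le {x y : ℝ} (hx : 0 ≤ x) (hxy : x ≤ y) (hy : 1 ≤ y) :
    Real.log x ≤ Real.log y := by
  rcases eq_or_lt_of_le hx with h | h
  · rw [← h, Real.log_zero]
    exact Real.log_nonneg hy
  · exact Real.log_le_log h hxy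

lemma gh_step_phi (hna : IsNonarchimedean v) {b : K} (hb : v b ≤ 1) (R : K × K) :
    ghAux v (R.2, R.1 + R.2 ^ 2 + b) ≤ 2 * ghAux v R := by
  have ht1 : (1 : ℝ) ≤ max (max (v R.1) (v R.2)) 1 := le_max_right _ _
  set t : ℝ := max (max (v R.1) (v R.2)) 1 with ht
  have hx : v R.1 ≤ t := (le_max_left _ _).trans (le_max_left _ _)
  have hy : v R.2 ≤ t := (le_max_right _ _).trans (le_max_left _ _)
  have hv1 : 0 ≤ v R.1 := v.nonneg _
  have hv2 : 0 ≤ v R.2 := v.nonneg _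
  have hkey : max (max (v R.2) (v (R.1 + R.2 ^ 2 + b))) 1 ≤ t ^ 2 := by
    have h1 : v (R.1 + R.2 ^ 2 + b) ≤ max (max (v R.1) (v (R.2 ^ 2))) (v b) :=
      (hna _ _).trans (max_le_max (hna _ _) le_rfl)
    have h2 : v (R.2 ^ 2) = v R.2 ^ 2 := map_pow v R.2 2
    rw [h2] at h1
    refine max_le (max_le (by nlinarith) ?_) (by nlinarith)
    exact h1.trans (max_le (max_le (by nlinarith) (by nlinarith)) (by nlinarith))
  have hlog : Real.log (max (max (v R.2) (v (R.1 + R.2 ^ 2 + b))) 1) ≤ Real.log (t ^ 2) :=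
    Real.log_le_log (lt_of_lt_of_le one_pos (le_max_right _ _)) hkey
  show Real.log (max (max (v R.2) (v (R.1 + R.2 ^ 2 + b))) 1) ≤ 2 * Real.log t
  calc Real.log (max (max (v R.2) (v (R.1 + R.2 ^ 2 + b))) 1) ≤ Real.log (t ^ 2) := hlog
  _ = 2 * Real.log t := by rw [Real.log_pow]; norm_num

lemma gh_step_phii (hna : IsNonarchimedean v) {b : K} (hb : v b ≤ 1) (R : K × K) :
    ghAux v (R.2 - R.1 ^ 2 - b, R.1) ≤ 2 * ghAux v R := by
  have ht1 : (1 : ℝ) ≤ max (max (v R.1) (v R.2)) 1 := le_max_right _ _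
  set t : ℝ := max (max (v R.1) (v R.2)) 1 with ht
  have hx : v R.1 ≤ t := (le_max_left _ _).trans (le_max_left _ _)
  have hy : v R.2 ≤ t := (le_max_right _ _).trans (le_max_left _ _)
  have hv1 : 0 ≤ v R.1 := v.nonneg _
  have hv2 : 0 ≤ v R.2 := v.nonneg _
  have hkey : max (max (v (R.2 - R.1 ^ 2 - b)) (v R.1)) 1 ≤ t ^ 2 := by
    have h1 : v (R.2 - R.1 ^ 2 - b) ≤ max (max (v R.2) (v (R.1 ^ 2))) (v b) :=
      (na_sub hna _ _).trans (max_le_max (na_sub hna _ _) le_rfl)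
    have h2 : v (R.1 ^ 2) = v R.1 ^ 2 := map_pow v R.1 2
    rw [h2] at h1
    refine max_le (max_le ?_ (by nlinarith)) (by nlinarith)
    exact h1.trans (max_le (max_le (by nlinarith) (by nlinarith)) (by nlinarith))
  have hlog : Real.log (max (max (v (R.2 - R.1 ^ 2 - b)) (v R.1)) 1) ≤ Real.log (t ^ 2) :=
    Real.log_le_log (lt_of_lt_of_le one_pos (le_max_right _ _)) hkey
  show Real.log (max (max (v (R.2 - R.1 ^ 2 - b)) (v R.1)) 1) ≤ 2 * Real.log t
  calc Real.log (max (max (v (R.2 - R.1 ^ 2 - b)) (v R.1)) 1) ≤ Real.log (t ^ 2) := hlog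
  _ = 2 * Real.log t := by rw [Real.log_pow]; norm_num

lemma gh_exp_phi (hna : IsNonarchimedean v) {b : K} (hb : v b ≤ 1) {R : K × K}
    (h1 : v R.1 ≤ v R.2) (h2 : 1 < v R.2) :
    (v (R.2, R.1 + R.2 ^ 2 + b).1 ≤ v (R.2, R.1 + R.2 ^ 2 + b).2 ∧
      1 < v (R.2, R.1 + R.2 ^ 2 + b).2) ∧
    ghAux v (R.2, R.1 + R.2 ^ 2 + b) = 2 * ghAux v R := by
  have hv2 : 0 ≤ v R.2 := v.nonneg _
  have h3 : v R.2 < v R.2 ^ 2 := by nlinarith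
  have hsq : v (R.2 ^ 2) = v R.2 ^ 2 := map_pow v R.2 2
  have hlt : v (R.1 + b) < v (R.2 ^ 2) := by
    rw [hsq]
    exact lt_of_le_of_lt (hna R.1 b)
      (max_lt (lt_of_le_of_lt h1 h3) (lt_of_le_of_lt hb (h2.trans h3)))
  have hval : v (R.1 + R.2 ^ 2 + b) = v R.2 ^ 2 := by
    have hre : R.1 + R.2 ^ 2 + b = R.2 ^ 2 + (R.1 + b) := by ring
    rw [hre, na_add_eq hna hlt, hsq]
  refine ⟨⟨?_, ?_⟩, ?_⟩
  · show v R.2 ≤ v (R.1 + R.2 ^ 2 + b)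
    rw [hval]; exact h3.le
  · show 1 < v (R.1 + R.2 ^ 2 + b)
    rw [hval]; exact h2.trans h3
  · show Real.log (max (max (v R.2) (v (R.1 + R.2 ^ 2 + b))) 1)
      = 2 * Real.log (max (max (v R.1) (v R.2)) 1)
    rw [hval, max_eq_right h3.le, max_eq_left (by nlinarith : (1:ℝ) ≤ v R.2 ^ 2),
      max_eq_right h1, max_eq_left h2.le, Real.log_pow]
    norm_num

lemma gh_exp_phii (hna : IsNonarchimedean v) {b : K} (hb : v b ≤ 1) {R : K × K}
    (h1 : v R.2 ≤ v R.1) (h2 : 1 < v R.1) :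
    (v (R.2 - R.1 ^ 2 - b, R.1).2 ≤ v (R.2 - R.1 ^ 2 - b, R.1).1 ∧
      1 < v (R.2 - R.1 ^ 2 - b, R.1).1) ∧
    ghAux v (R.2 - R.1 ^ 2 - b, R.1) = 2 * ghAux v R := by
  have hv1 : 0 ≤ v R.1 := v.nonneg _
  have h3 : v R.1 < v R.1 ^ 2 := by nlinarith
  have hsq : v (-(R.1 ^ 2)) = v R.1 ^ 2 := by rw [v.map_neg, map_pow]
  have hlt : v (R.2 - b) < v (-(R.1 ^ 2)) := by
    rw [hsq]
    exact lt_of_le_of_lt (na_sub hna R.2 b)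
      (max_lt (lt_of_le_of_lt h1 h3) (lt_of_le_of_lt hb (h2.trans h3)))
  have hval : v (R.2 - R.1 ^ 2 - b) = v R.1 ^ 2 := by
    have hre : R.2 - R.1 ^ 2 - b = -(R.1 ^ 2) + (R.2 - b) := by ring
    rw [hre, na_add_eq hna hlt, hsq]
  refine ⟨⟨?_, ?_⟩, ?_⟩
  · show v R.1 ≤ v (R.2 - R.1 ^ 2 - b)
    rw [hval]; exact h3.le
  · show 1 < v (R.2 - R.1 ^ 2 - b)
    rw [hval]; exact h2.trans h3
  · show Real.log (max (max (v (R.2 - R.1 ^ 2 - b)) (v R.1)) 1)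
      = 2 * Real.log (max (max (v R.1) (v R.2)) 1)
    rw [hval, max_eq_left h3.le, max_eq_left (by nlinarith : (1:ℝ) ≤ v R.1 ^ 2),
      max_eq_left h1, max_eq_left h2.le, Real.log_pow]
    norm_num

end Aux

/-- good reduction: for `φ(x,y) = (y, x+y²+b)` with `|b| ≤ 1` at a
non-archimedean place, the differences of coordinates along the orbit segment
`φ^j(P)`, `−M ≤ j ≤ M`, satisfy `log|x_i − x_j|, log|y_i − y_j| ≤ 2^{M+1}(λ⁺(P)+λ⁻(P))`. -/
theorem stmt12 {K : Type*} [Field K] (v : AbsoluteValue K ℝ)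
    (hna : IsNonarchimedean v) (b : K) (hb : v b ≤ 1)
    (φ φi : K × K → K × K)
    (hφ : ∀ P, φ P = (P.2, P.1 + P.2 ^ 2 + b))
    (hφi : ∀ P, φi P = (P.2 - P.1 ^ 2 - b, P.1))
    (P : K × K) (lp lm : ℝ)
    (hlp : Tendsto (fun N : ℕ => ((2 : ℝ)⁻¹) ^ N *
      Real.log (max (max (v (φ^[N] P).1) (v (φ^[N] P).2)) 1)) atTop (nhds lp))
    (hlm : Tendsto (fun N : ℕ => ((2 : ℝ)⁻¹) ^ N *
      Real.log (max (max (v (φi^[N] P).1) (v (φi^[N] P).2)) 1)) atTop (nhds lm))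
    (M : ℕ) (hM : 1 ≤ M)
    (Q : ℤ → K × K) (hQ0 : Q 0 = P) (hQs : ∀ n : ℤ, Q (n + 1) = φ (Q n)) :
    ∀ i j : ℤ, |i| ≤ (M : ℤ) → |j| ≤ (M : ℤ) →
      Real.log (v ((Q i).1 - (Q j).1)) ≤ 2 ^ (M + 1) * (lp + lm) ∧
      Real.log (v ((Q i).2 - (Q j).2)) ≤ 2 ^ (M + 1) * (lp + lm) := by
  -- nonnegativity of the limits
  have hlp0 : 0 ≤ lp := ge_of_tendsto' hlp fun N =>
    mul_nonneg (by positivity) (Real.log_nonneg (le_max_right _ _))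
  have hlm0 : 0 ≤ lm := ge_of_tendsto' hlm fun N =>
    mul_nonneg (by positivity) (Real.log_nonneg (le_max_right _ _))
  -- key: log⁺‖P‖ ≤ lp + lm
  have hkey : ghAux v P ≤ lp + lm := by
    rcases le_or_gt (max (v P.1) (v P.2)) 1 with h | h
    · have h0 : ghAux v P = 0 := by
        unfold ghAux; rw [max_eq_right h, Real.log_one]
      rw [h0]; linarith
    · rcases le_total (v P.1) (v P.2) with h1 | h1
      · have h2 : 1 < v P.2 := by rwa [max_eq_right h1] at h
        have hiter : ∀ N : ℕ, (v (φ^[N] P).1 ≤ v (φ^[N] P).2 ∧ 1 < v (φ^[N] P).2) ∧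
            ghAux v (φ^[N] P) = 2 ^ N * ghAux v P := by
          intro N
          induction N with
          | zero =>
            simp only [Function.iterate_zero_apply, pow_zero, one_mul]
            exact ⟨⟨h1, h2⟩, trivial⟩
          | succ N ih =>
            obtain ⟨⟨ih1, ih2⟩, ih3⟩ := ih
            have hstep := gh_exp_phi hna hb ih1 ih2
            rw [Function.iterate_succ_apply', hφ (φ^[N] P)]
            exact ⟨hstep.1, by rw [hstep.2, ih3]; ring⟩
        have hconst : Tendsto (fun N : ℕ => ((2 : ℝ)⁻¹) ^ N *
            Real.log (max (max (v (φ^[N] P).1) (v (φ^[N] P).2)) 1)) atTop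
            (nhds (ghAux v P)) := by
          have hfun : (fun N : ℕ => ((2 : ℝ)⁻¹) ^ N *
              Real.log (max (max (v (φ^[N] P).1) (v (φ^[N] P).2)) 1))
              = fun _ : ℕ => ghAux v P := by
            funext N
            show ((2 : ℝ)⁻¹) ^ N * ghAux v (φ^[N] P) = ghAux v P
            rw [(hiter N).2, ← mul_assoc, ← mul_pow]
            norm_num
          rw [hfun]
          exact tendsto_const_nhds
        have : lp = ghAux v P := tendsto_nhds_unique hlp hconst
        linarith
      · have h2 : 1 < v P.1 := by rwa [max_eq_left h1] at h
        have hiter : ∀ N : ℕ, (v (φi^[N] P).2 ≤ v (φi^[N] P).1 ∧ 1 < v (φi^[N] P).1) ∧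
            ghAux v (φi^[N] P) = 2 ^ N * ghAux v P := by
          intro N
          induction N with
          | zero =>
            simp only [Function.iterate_zero_apply, pow_zero, one_mul]
            exact ⟨⟨h1, h2⟩, trivial⟩
          | succ N ih =>
            obtain ⟨⟨ih1, ih2⟩, ih3⟩ := ih
            have hstep := gh_exp_phii hna hb ih1 ih2
            rw [Function.iterate_succ_apply', hφi (φi^[N] P)]
            exact ⟨hstep.1, by rw [hstep.2, ih3]; ring⟩
        have hconst : Tendsto (fun N : ℕ => ((2 : ℝ)⁻¹) ^ N *
            Real.log (max (max (v (φi^[N] P).1) (v (φi^[N] P).2)) 1)) atTop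
            (nhds (ghAux v P)) := by
          have hfun : (fun N : ℕ => ((2 : ℝ)⁻¹) ^ N *
              Real.log (max (max (v (φi^[N] P).1) (v (φi^[N] P).2)) 1))
              = fun _ : ℕ => ghAux v P := by
            funext N
            show ((2 : ℝ)⁻¹) ^ N * ghAux v (φi^[N] P) = ghAux v P
            rw [(hiter N).2, ← mul_assoc, ← mul_pow]
            norm_num
          rw [hfun]
          exact tendsto_const_nhds
        have : lm = ghAux v P := tendsto_nhds_unique hlm hconst
        linarith
  -- growth along any map with doubling bound
  have hgrow : ∀ (ψ : K × K → K × K), (∀ R, ghAux v (ψ R) ≤ 2 * ghAux v R) →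
      ∀ (n : ℕ), ghAux v (ψ^[n] P) ≤ 2 ^ n * ghAux v P := by
    intro ψ hψ n
    induction n with
    | zero => simp
    | succ n ih =>
      rw [Function.iterate_succ_apply']
      calc ghAux v (ψ (ψ^[n] P)) ≤ 2 * ghAux v (ψ^[n] P) := hψ _
      _ ≤ 2 * (2 ^ n * ghAux v P) := by linarith
      _ = 2 ^ (n + 1) * ghAux v P := by ring
  have hφle : ∀ R, ghAux v (φ R) ≤ 2 * ghAux v R := fun R => by
    rw [hφ]; exact gh_step_phi hna hb R
  have hφile : ∀ R, ghAux v (φi R) ≤ 2 * ghAux v R := fun R => by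
    rw [hφi]; exact gh_step_phii hna hb R
  -- identify the orbit
  have hQpos : ∀ n : ℕ, Q (n : ℤ) = φ^[n] P := by
    intro n
    induction n with
    | zero => simpa using hQ0
    | succ n ih =>
      have hc : ((n : ℤ) + 1) = ((n + 1 : ℕ) : ℤ) := by push_cast; ring
      rw [← hc, hQs, ih, Function.iterate_succ_apply']
  have hinv : ∀ R : K × K, φi (φ R) = R := by
    intro R
    rw [hφ, hφi]
    show (R.1 + R.2 ^ 2 + b - R.2 ^ 2 - b, R.2) = R
    refine Prod.ext ?_ rfl
    show R.1 + R.2 ^ 2 + b - R.2 ^ 2 - b = R.1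
    ring
  have hQneg : ∀ n : ℕ, Q (-(n : ℤ)) = φi^[n] P := by
    intro n
    induction n with
    | zero => simpa using hQ0
    | succ n ih =>
      have h1 : Q (-(n : ℤ)) = φ (Q (-((n + 1 : ℕ) : ℤ))) := by
        have h := hQs (-((n + 1 : ℕ) : ℤ))
        rw [← h]
        congr 1
        push_cast
        ring
      have h2 : φi (Q (-(n : ℤ))) = Q (-((n + 1 : ℕ) : ℤ)) := by
        rw [h1, hinv]
      rw [← h2, ih, Function.iterate_succ_apply']
  have hsum0 : 0 ≤ lp + lm := by linarith
  -- per-point bound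
  have hpoint : ∀ i : ℤ, |i| ≤ (M : ℤ) → ghAux v (Q i) ≤ 2 ^ (M + 1) * (lp + lm) := by
    intro i hi
    rw [abs_le] at hi
    have hgP : 0 ≤ ghAux v P := ghAux_nonneg v P
    have hb1 : ghAux v (Q i) ≤ 2 ^ M * ghAux v P := by
      rcases le_or_gt 0 i with h | h
      · have hiM : i.toNat ≤ M := by omega
        have hQi : Q i = φ^[i.toNat] P := by
          rw [← hQpos i.toNat]; congr 1; omega
        rw [hQi]
        calc ghAux v (φ^[i.toNat] P) ≤ 2 ^ i.toNat * ghAux v P := hgrow φ hφle i.toNat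
        _ ≤ 2 ^ M * ghAux v P := by
            apply mul_le_mul_of_nonneg_right _ hgP
            exact pow_le_pow_right₀ one_le_two hiM
      · have hiM : (-i).toNat ≤ M := by omega
        have hQi : Q i = φi^[(-i).toNat] P := by
          rw [← hQneg (-i).toNat]; congr 1; omega
        rw [hQi]
        calc ghAux v (φi^[(-i).toNat] P) ≤ 2 ^ (-i).toNat * ghAux v P :=
              hgrow φi hφile (-i).toNat
        _ ≤ 2 ^ M * ghAux v P := by
            apply mul_le_mul_of_nonneg_right _ hgP
            exact pow_le_pow_right₀ one_le_two hiM
    calc ghAux v (Q i) ≤ 2 ^ M * ghAux v P := hb1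
    _ ≤ 2 ^ M * (lp + lm) := mul_le_mul_of_nonneg_left hkey (by positivity)
    _ ≤ 2 ^ (M + 1) * (lp + lm) := by
        apply mul_le_mul_of_nonneg_right _ hsum0
        exact pow_le_pow_right₀ one_le_two (Nat.le_succ M)
  -- conclude
  intro i j hi hj
  have hRi := hpoint i hi
  have hRj := hpoint j hj
  have key : ∀ a c : K, v a ≤ max (max (v (Q i).1) (v (Q i).2)) 1 →
      v c ≤ max (max (v (Q j).1) (v (Q j).2)) 1 →
      Real.log (v (a - c)) ≤ 2 ^ (M + 1) * (lp + lm) := by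
    intro a c ha hc
    have h2 : v (a - c) ≤ max (max (max (v (Q i).1) (v (Q i).2)) 1)
        (max (max (v (Q j).1) (v (Q j).2)) 1) :=
      (na_sub hna a c).trans (max_le_max ha hc)
    rcases le_total (max (max (v (Q i).1) (v (Q i).2)) 1)
        (max (max (v (Q j).1) (v (Q j).2)) 1) with h | h
    · have := log_le_of_le (v.nonneg _) (h2.trans_eq (max_eq_right h)) (le_max_right _ _)
      exact this.trans hRj
    · have := log_le_of_le (v.nonneg _) (h2.trans_eq (max_eq_left h)) (le_max_right _ _)
      exact this.trans hRi
  exact ⟨key _ _ ((le_max_left _ _).trans (le_max_left _ _))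
      ((le_max_left _ _).trans (le_max_left _ _)),
    key _ _ ((le_max_right _ _).trans (le_max_left _ _))
      ((le_max_right _ _).trans (le_max_left _ _))⟩
end

section
/- Let K be a field with a non-archimedean absolute value, b ∈ K, and φ(x,y) = (y, x + y² + b). If P = (x,y) satisfies |y|² > max(|x|, |b|, 1), then the forward local canonical height satisfies λ⁺(P) := lim_{N→∞} 2^{-N} log⁺‖φ^N(P)‖ = log|y|. Symmetrically, if |x|² > max(|y|, |b|, 1), then λ⁻(P) := lim_{N→∞} 2^{-N} log⁺‖φ^{-N}(P)‖ = log|x|. -/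
/-!
Once `|y|² > max(|x|, |b|, 1)`, the ultrametric inequality makes `y²` the dominant term of
`x + y² + b`, so `φ(x, y)` has sizes `(|y|, |y|²)` and lies in the same region again. Along the
orbit the sizes are therefore exactly `(|y|^(2^(N-1)), |y|^(2^N))`, and
`2^(-N) log⁺ ‖φ^N(P)‖ = log |y|` for every `N ≥ 1`. The inverse map has the same shape with the
coordinates exchanged, which gives the backward statement.
-/

open Filter

lemma IsNonarchimedean.apply_add_add_eq_of_lt {F α : Type*} [AddCommGroup α] [FunLike F α ℝ]
    [AddGroupSeminormClass F α ℝ] {f : F} (hna : IsNonarchimedean f) {a w c : α}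
    (h : max (f a) (f c) < f w) : f (a + w + c) = f w := by
  rw [add_right_comm, add_comm]
  exact hna.add_eq_left_of_lt ((hna a c).trans_lt h)

section EscapeRegion

variable {α : Type*} {ψ : α → α} {p q : α → ℝ} {B : ℝ}

/-- `p` and `q` stand for the sizes `|x|` and `|y|` of the two coordinates. -/
def escapeRegion (p q : α → ℝ) (B : ℝ) : Set α := {Q | max (p Q) (max B 1) < q Q ^ 2}

variable (hp : ∀ Q, p (ψ Q) = q Q) (hq : ∀ Q ∈ escapeRegion p q B, q (ψ Q) = q Q ^ 2)
include hp hq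

lemma mapsTo_escapeRegion : Set.MapsTo ψ (escapeRegion p q B) (escapeRegion p q B) := by
  intro Q hQ
  obtain ⟨hpQ, hBQ, hQ1⟩ : p Q < q Q ^ 2 ∧ B < q Q ^ 2 ∧ 1 < q Q ^ 2 := by
    simpa only [escapeRegion, Set.mem_ofPred_eq, max_lt_iff] using hQ
  show max (p (ψ Q)) (max B 1) < q (ψ Q) ^ 2
  rw [hp, hq Q hQ, max_lt_iff, max_lt_iff]
  refine ⟨?_, ?_, ?_⟩ <;> nlinarith [sq_nonneg (q Q - 1), sq_nonneg (q Q + 1)]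

lemma sup_apply_eq_sq {Q : α} (hQ : Q ∈ escapeRegion p q B) :
    max (max (p (ψ Q)) (q (ψ Q))) 1 = q Q ^ 2 := by
  have hQ1 : 1 < q Q ^ 2 := (le_max_right _ _).trans_lt ((le_max_right _ _).trans_lt hQ)
  have hle : q Q ≤ q Q ^ 2 := by nlinarith [sq_nonneg (q Q - 1)]
  rw [hp, hq Q hQ, max_eq_right hle, max_eq_left hQ1.le]

lemma apply_iterate_eq_pow {P : α} (hP : P ∈ escapeRegion p q B) (N : ℕ) :
    q (ψ^[N] P) = q P ^ 2 ^ N := by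
  induction N with
  | zero => simp
  | succ N ih =>
    rw [Function.iterate_succ_apply', hq _ ((mapsTo_escapeRegion hp hq).iterate N hP), ih,
      ← pow_mul, pow_succ]

theorem tendsto_log_sup_iterate {P : α} (hP : P ∈ escapeRegion p q B) :
    Tendsto (fun N : ℕ => (2 : ℝ)⁻¹ ^ N *
      Real.log (max (max (p (ψ^[N] P)) (q (ψ^[N] P))) 1)) atTop (nhds (Real.log (q P))) := by
  rw [← tendsto_add_atTop_iff_nat 1]
  refine tendsto_const_nhds.congr fun N => ?_
  rw [Function.iterate_succ_apply',
    sup_apply_eq_sq hp hq ((mapsTo_escapeRegion hp hq).iterate N hP),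
    apply_iterate_eq_pow hp hq hP, ← pow_mul, ← pow_succ, Real.log_pow]
  push_cast
  rw [← mul_assoc, ← mul_pow, inv_mul_cancel₀ two_ne_zero, one_pow, one_mul]

end EscapeRegion

/-- for `φ(x,y) = (y, x+y²+b)` at a non-archimedean place, if
`|y|² > max(|x|,|b|,1)` then the forward local canonical height of `P = (x,y)`
equals `log|y|`; symmetrically, if `|x|² > max(|y|,|b|,1)` then the backward local
canonical height equals `log|x|`. -/
theorem stmt13 {K : Type*} [Field K] (v : AbsoluteValue K ℝ)
    (hna : IsNonarchimedean v) (b : K)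
    (φ φi : K × K → K × K)
    (hφ : ∀ P, φ P = (P.2, P.1 + P.2 ^ 2 + b))
    (hφi : ∀ P, φi P = (P.2 - P.1 ^ 2 - b, P.1))
    (P : K × K) :
    ((v P.2) ^ 2 > max (v P.1) (max (v b) 1) →
      Tendsto (fun N : ℕ => ((2 : ℝ)⁻¹) ^ N *
        Real.log (max (max (v (φ^[N] P).1) (v (φ^[N] P).2)) 1)) atTop
        (nhds (Real.log (v P.2)))) ∧
    ((v P.1) ^ 2 > max (v P.2) (max (v b) 1) →
      Tendsto (fun N : ℕ => ((2 : ℝ)⁻¹) ^ N *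
        Real.log (max (max (v (φi^[N] P).1) (v (φi^[N] P).2)) 1)) atTop
        (nhds (Real.log (v P.1)))) := by
  constructor
  · refine tendsto_log_sup_iterate (p := fun Q : K × K => v Q.1) (q := fun Q => v Q.2)
      (B := v b) (fun Q => by rw [hφ]) (fun Q hQ => ?_)
    have hdom : max (v Q.1) (v b) < v (Q.2 ^ 2) :=
      (map_pow v Q.2 2).symm ▸ (max_le_max le_rfl (le_max_left _ _)).trans_lt hQ
    rw [hφ, hna.apply_add_add_eq_of_lt hdom, map_pow]
  · intro hP
    have backward := tendsto_log_sup_iterate (p := fun Q : K × K => v Q.2)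
      (q := fun Q => v Q.1) (B := v b) (ψ := φi) (fun Q => by rw [hφi]) (fun Q hQ => ?_) hP
    · simpa only [max_comm (v (φi^[_] P).2)] using backward
    have hdom : max (v Q.2) (v (-b)) < v (-Q.1 ^ 2) := by
      rw [map_neg_eq_map, map_neg_eq_map, map_pow]
      exact (max_le_max le_rfl (le_max_left _ _)).trans_lt hQ
    rw [hφi, sub_eq_add_neg, sub_eq_add_neg, hna.apply_add_add_eq_of_lt hdom, map_neg_eq_map,
      map_pow]
end

section
/- Let p ≥ 5 be prime, let ψ : ℤ_p² → ℤ_p² be given by a pair of polynomials with ℤ_p coefficients, and suppose the origin O = (0,0) is fixed by ψ modulo p (i.e., ψ(O) ≡ O mod p), the Jacobian matrix J of ψ at O satisfies J ≡ I mod p, and det J is a p-adic unit. If O is a periodic point of ψ of exact period N, then N = 1, i.e., O is a fixed point of ψ. -/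
open MvPolynomial Finset

variable {R : Type*} [CommRing R]

/-- Polynomial evaluation respects divisibility congruences. -/
lemma eval_sub_dvd (f : MvPolynomial (Fin 2) R) {c : R} {P Q : Fin 2 → R}
    (h : ∀ i, c ∣ P i - Q i) : c ∣ eval P f - eval Q f := by
  induction f using MvPolynomial.induction_on with
  | C a => simp
  | add f g hf hg =>
      have := dvd_add hf hg
      simpa [eval_add, add_sub_add_comm] using this
  | mul_X f i hf =>
      rw [eval_mul, eval_mul, eval_X, eval_X]
      have : eval P f * P i - eval Q f * Q i
          = (eval P f - eval Q f) * P i + eval Q f * (P i - Q i) := by ring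
      rw [this]
      exact dvd_add (Dvd.dvd.mul_right hf _) (Dvd.dvd.mul_left (h i) _)

variable {R : Type*} [CommRing R]

lemma taylor2 (f : MvPolynomial (Fin 2) R) (P h : Fin 2 → R) (c : R) (hc : ∀ i, c ∣ h i) :
    c ^ 3 ∣ 2 * eval (P + h) f - 2 * eval P f - 2 * ∑ j, eval P (pderiv j f) * h j
      - ∑ j, ∑ l, eval P (pderiv l (pderiv j f)) * h j * h l := by
  simp only [Fin.sum_univ_two]
  induction f using MvPolynomial.induction_on with
  | C a => simp
  | add f g hf hg =>
      have := dvd_add hf hg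
      convert this using 1
      simp only [eval_add, map_add]
      ring
  | mul_X f i hf =>
      obtain ⟨t, ht⟩ := hf
      obtain ⟨a, ha⟩ := hc 0
      obtain ⟨b, hb⟩ := hc 1
      rw [ha, hb] at ht
      fin_cases i <;>
      · simp only [pderiv_mul, pderiv_X, eval_mul, eval_add, eval_X, map_add, map_mul,
          Pi.single_eq_same, Pi.single_eq_of_ne (by decide : (1:Fin 2) ≠ 0),
          Pi.single_eq_of_ne (by decide : (0:Fin 2) ≠ 1), map_one, map_zero, Pi.add_apply,
          Fin.mk_zero, Fin.mk_one, Fin.isValue, pderiv_one,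
          mul_one, mul_zero, add_zero, zero_add, one_mul, zero_mul]
        rw [ha, hb]
        first
        | exact ⟨(P 0 + c*a) * t + a * (eval P (pderiv 0 (pderiv 0 f)) * a * a
              + eval P (pderiv 1 (pderiv 0 f)) * a * b + eval P (pderiv 0 (pderiv 1 f)) * a * b
              + eval P (pderiv 1 (pderiv 1 f)) * b * b),
            by linear_combination (P 0 + c*a) * ht⟩
        | exact ⟨(P 1 + c*b) * t + b * (eval P (pderiv 0 (pderiv 0 f)) * a * a
              + eval P (pderiv 1 (pderiv 0 f)) * a * b + eval P (pderiv 0 (pderiv 1 f)) * a * b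
              + eval P (pderiv 1 (pderiv 1 f)) * b * b),
            by linear_combination (P 1 + c*b) * ht⟩

variable {R : Type*} [CommRing R]

lemma pderiv_bind₁ (s : Fin 2 → MvPolynomial (Fin 2) R) (f : MvPolynomial (Fin 2) R) (i : Fin 2) :
    pderiv i (bind₁ s f) = ∑ j, bind₁ s (pderiv j f) * pderiv i (s j) := by
  simp only [Fin.sum_univ_two]
  induction f using MvPolynomial.induction_on with
  | C a => simp
  | add f g hf hg => simp only [map_add, hf, hg]; ring
  | mul_X f j hf =>
      rw [map_mul, bind₁_X_right, pderiv_mul, hf]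
      fin_cases j <;>
        simp only [pderiv_mul, pderiv_X, map_mul, bind₁_X_right, Fin.mk_zero, Fin.mk_one,
          Fin.isValue, Pi.single_eq_same, Pi.single_eq_of_ne (by decide : (1:Fin 2) ≠ 0),
          Pi.single_eq_of_ne (by decide : (0:Fin 2) ≠ 1), map_one, map_zero, map_add, mul_one, mul_zero,
          add_zero, zero_add, one_mul, zero_mul] <;>
        ring
variable {p : ℕ} [hpp : Fact p.Prime]



lemma isUnit_cast_of_not_dvd {n : ℕ} (h : ¬ p ∣ n) : IsUnit (n : ℤ_[p]) := by
  rw [PadicInt.isUnit_iff]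
  refine le_antisymm (PadicInt.norm_le_one _) (not_lt.mp ?_)
  rw [show ((n : ℤ_[p])) = (((n : ℤ) : ℤ_[p])) by push_cast; ring,
    PadicInt.norm_int_lt_one_iff_dvd]
  exact fun hh => h (by exact_mod_cast hh)

lemma isUnit_two_padic (hp5 : 5 ≤ p) : IsUnit (2 : ℤ_[p]) := by
  have : ((2 : ℕ) : ℤ_[p]) = 2 := by norm_num
  rw [← this]
  exact isUnit_cast_of_not_dvd (fun hd => by
    have := Nat.le_of_dvd (by norm_num) hd; omega)

lemma eq_zero_of_forall_pow_dvd (x : ℤ_[p]) (h : ∀ n : ℕ, (p : ℤ_[p]) ^ n ∣ x) : x = 0 := by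
  by_contra hx
  have h0 : 0 < ‖x‖ := norm_pos_iff.mpr hx
  have hp1 : (1 : ℝ) < p := by exact_mod_cast hpp.out.one_lt
  have hinv : (p : ℝ)⁻¹ < 1 := inv_lt_one_of_one_lt₀ hp1
  obtain ⟨n, hn⟩ := exists_pow_lt_of_lt_one h0 hinv
  obtain ⟨y, hy⟩ := h n
  have : ‖x‖ ≤ ((p : ℝ)⁻¹) ^ n := by
    rw [hy]
    calc ‖(p : ℤ_[p]) ^ n * y‖ ≤ ‖(p : ℤ_[p]) ^ n‖ * 1 := by
          rw [norm_mul]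
          exact mul_le_mul_of_nonneg_left (PadicInt.norm_le_one y) (norm_nonneg _)
      _ = ((p : ℝ)⁻¹) ^ n := by
          rw [mul_one, norm_pow, PadicInt.norm_p]
  linarith

lemma eval_bind₁' (s : Fin 2 → MvPolynomial (Fin 2) ℤ_[p]) (f : MvPolynomial (Fin 2) ℤ_[p])
    (x : Fin 2 → ℤ_[p]) : eval x (bind₁ s f) = eval (fun j => eval x (s j)) f := by
  have : (eval x : MvPolynomial (Fin 2) ℤ_[p] →+* ℤ_[p]) = eval₂Hom (RingHom.id ℤ_[p]) x := rfl
  rw [this, eval₂Hom_bind₁]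
  rfl

noncomputable def Phi (F : Fin 2 → MvPolynomial (Fin 2) ℤ_[p]) (x : Fin 2 → ℤ_[p]) : Fin 2 → ℤ_[p] :=
  fun i => eval x (F i)

noncomputable def iterF (F : Fin 2 → MvPolynomial (Fin 2) ℤ_[p]) : ℕ → Fin 2 → MvPolynomial (Fin 2) ℤ_[p]
  | 0 => X
  | M + 1 => fun i => bind₁ (iterF F M) (F i)

lemma Phi_iterF (F : Fin 2 → MvPolynomial (Fin 2) ℤ_[p]) (M : ℕ) :
    Phi (iterF F M) = (Phi F)^[M] := by
  induction M with
  | zero => funext x i; simp [Phi, iterF]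
  | succ M ih =>
      funext x i
      rw [Function.iterate_succ_apply', ← ih]
      simp only [Phi, iterF, eval_bind₁']
      rfl

def GoodF (F : Fin 2 → MvPolynomial (Fin 2) ℤ_[p]) : Prop :=
  (∀ i, (p : ℤ_[p]) ∣ eval 0 (F i)) ∧
  (∀ i j, (p : ℤ_[p]) ∣ eval 0 (pderiv j (F i)) - if i = j then 1 else 0)

lemma orbit_in_D (F : Fin 2 → MvPolynomial (Fin 2) ℤ_[p]) (hF : GoodF F) (M : ℕ) :
    ∀ i, (p : ℤ_[p]) ∣ (Phi F)^[M] 0 i := by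
  induction M with
  | zero => simp
  | succ M ih =>
      intro i
      rw [Function.iterate_succ_apply']
      have h1 : (p : ℤ_[p]) ∣ eval ((Phi F)^[M] 0) (F i) - eval 0 (F i) :=
        eval_sub_dvd (F i) (fun j => by simpa using ih j)
      have := dvd_add h1 (hF.1 i)
      simpa [Phi] using this

lemma pderiv_in_D (F : Fin 2 → MvPolynomial (Fin 2) ℤ_[p]) (hF : GoodF F)
    {x : Fin 2 → ℤ_[p]} (hx : ∀ i, (p : ℤ_[p]) ∣ x i) (i j : Fin 2) :
    (p : ℤ_[p]) ∣ eval x (pderiv j (F i)) - if i = j then 1 else 0 := by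
  have h1 : (p : ℤ_[p]) ∣ eval x (pderiv j (F i)) - eval 0 (pderiv j (F i)) :=
    eval_sub_dvd _ (fun k => by simpa using hx k)
  have := dvd_add h1 (hF.2 i j)
  simpa using this

lemma goodF_iterF (F : Fin 2 → MvPolynomial (Fin 2) ℤ_[p]) (hF : GoodF F) (M : ℕ) :
    GoodF (iterF F M) := by
  induction M with
  | zero =>
      constructor
      · intro i; simp [iterF]
      · intro i j
        simp only [iterF, pderiv_X]
        rcases eq_or_ne i j with h | h
        · subst h; simp
        · rw [Pi.single_eq_of_ne h 1, if_neg h]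
          simp
  | succ M ih =>
      constructor
      · intro i
        have := orbit_in_D F hF (M + 1) i
        rwa [← Phi_iterF, show Phi (iterF F (M+1)) 0 i = eval 0 (iterF F (M+1) i) from rfl] at this
      · intro i j
        show (p : ℤ_[p]) ∣ eval 0 (pderiv j (bind₁ (iterF F M) (F i))) - _
        rw [pderiv_bind₁]
        simp only [Fin.sum_univ_two, map_add, eval_mul]
        have hbase : ∀ l, eval 0 (bind₁ (iterF F M) (pderiv l (F i)))
            = eval ((Phi F)^[M] 0) (pderiv l (F i)) := by
          intro l
          rw [eval_bind₁', ← Phi_iterF]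
          rfl
        obtain ⟨a0, ha0⟩ := pderiv_in_D F hF (fun k => orbit_in_D F hF M k) i 0
        obtain ⟨a1, ha1⟩ := pderiv_in_D F hF (fun k => orbit_in_D F hF M k) i 1
        obtain ⟨b0, hb0⟩ := (ih).2 0 j
        obtain ⟨b1, hb1⟩ := (ih).2 1 j
        rw [hbase 0, hbase 1]
        set d : Fin 2 → Fin 2 → ℤ_[p] := fun a b => if a = b then 1 else 0 with hdd
        have hd : d i 0 * d 0 j + d i 1 * d 1 j = d i j := by
          fin_cases i <;> fin_cases j <;> simp [hdd]
        have ha0' : eval ((Phi F)^[M] 0) (pderiv 0 (F i)) - d i 0 = p * a0 := ha0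
        have ha1' : eval ((Phi F)^[M] 0) (pderiv 1 (F i)) - d i 1 = p * a1 := ha1
        have hb0' : eval 0 (pderiv j (iterF F M 0)) - d 0 j = p * b0 := hb0
        have hb1' : eval 0 (pderiv j (iterF F M 1)) - d 1 j = p * b1 := hb1
        refine ⟨a0 * eval 0 (pderiv j (iterF F M 0)) + d i 0 * b0
          + a1 * eval 0 (pderiv j (iterF F M 1)) + d i 1 * b1, ?_⟩
        have : (if i = j then (1:ℤ_[p]) else 0) = d i j := rfl
        rw [this]
        linear_combination (eval 0 (pderiv j (iterF F M 0))) * ha0'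
          + d i 0 * hb0' + (eval 0 (pderiv j (iterF F M 1))) * ha1' + d i 1 * hb1' + hd

lemma dvd_of_dvd_unit_mul {a u x : ℤ_[p]} (hu : IsUnit u) (h : a ∣ u * x) : a ∣ x := by
  rcases isUnit_iff_exists_inv.mp hu with ⟨w, hw⟩
  have : x = w * (u * x) := by
    rw [← mul_assoc, mul_comm w u, hw, one_mul]
  rw [this]
  exact Dvd.dvd.mul_left h w

lemma step_exp (F : Fin 2 → MvPolynomial (Fin 2) ℤ_[p]) (v : ℕ)
    (x : Fin 2 → ℤ_[p]) (hx : ∀ i, (p : ℤ_[p]) ^ v ∣ x i) (i : Fin 2) :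
    (p : ℤ_[p]) ^ (3 * v) ∣ 2 * eval x (F i) - 2 * eval 0 (F i)
      - 2 * (eval 0 (pderiv 0 (F i)) * x 0 + eval 0 (pderiv 1 (F i)) * x 1)
      - (eval 0 (pderiv 0 (pderiv 0 (F i))) * x 0 * x 0
         + eval 0 (pderiv 1 (pderiv 0 (F i))) * x 0 * x 1
         + (eval 0 (pderiv 0 (pderiv 1 (F i))) * x 1 * x 0
            + eval 0 (pderiv 1 (pderiv 1 (F i))) * x 1 * x 1)) := by
  have := taylor2 (F i) 0 x ((p : ℤ_[p]) ^ v) hx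
  simp only [Fin.sum_univ_two, zero_add] at this
  rw [show ((p:ℤ_[p])^v)^3 = (p:ℤ_[p])^(3*v) by rw [← pow_mul, mul_comm]] at this
  exact this

set_option maxHeartbeats 1000000 in
lemma lemA (F : Fin 2 → MvPolynomial (Fin 2) ℤ_[p]) (hF : GoodF F) (hp5 : 5 ≤ p)
    (N : ℕ) (hpN : ¬ p ∣ N) (hper : (Phi F)^[N] 0 = 0) : Phi F 0 = 0 := by
  have h2 : IsUnit (2 : ℤ_[p]) := isUnit_two_padic hp5
  have key : ∀ v, 1 ≤ v → (∀ i, (p:ℤ_[p])^v ∣ Phi F 0 i) →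
      ∀ i, (p:ℤ_[p])^(v+1) ∣ Phi F 0 i := by
    intro v hv hδ
    have claim : ∀ k, ∀ i, (p:ℤ_[p])^(v+1) ∣
        2 * ((Phi F)^[k] 0 i) - 2 * (k:ℤ_[p]) * (Phi F 0 i) := by
      intro k
      induction k with
      | zero => intro i; simp
      | succ k ih =>
        have hxk : ∀ j, (p:ℤ_[p])^v ∣ (Phi F)^[k] 0 j := by
          intro j
          refine dvd_of_dvd_unit_mul h2 ?_
          have h1 : (p:ℤ_[p])^v ∣ 2 * ((Phi F)^[k] 0 j) - 2*(k:ℤ_[p]) * Phi F 0 j :=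
            dvd_trans (pow_dvd_pow _ (by omega)) (ih j)
          have h2' : (p:ℤ_[p])^v ∣ 2*(k:ℤ_[p]) * Phi F 0 j := Dvd.dvd.mul_left (hδ j) _
          have := dvd_add h1 h2'
          simpa [mul_comm] using this
        intro i
        rw [Function.iterate_succ_apply']
        have hPa : ∀ x : Fin 2 → ℤ_[p], Phi F x i = eval x (F i) := fun _ => rfl
        rw [hPa, hPa]
        push_cast
        have hq : ∀ (e : ℤ_[p]) (j l : Fin 2), (p:ℤ_[p])^(v+1) ∣
            e * ((Phi F)^[k] 0 j) * ((Phi F)^[k] 0 l) := by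
          intro e j l
          refine dvd_trans (pow_dvd_pow _ (by omega : v+1 ≤ v+v)) ?_
          rw [mul_assoc, pow_add]
          exact Dvd.dvd.mul_left (mul_dvd_mul (hxk j) (hxk l)) e
        have hT' : (p:ℤ_[p])^(v+1) ∣ 2 * eval ((Phi F)^[k] 0) (F i) - 2 * eval 0 (F i)
            - 2 * (eval 0 (pderiv 0 (F i)) * ((Phi F)^[k] 0 0)
                   + eval 0 (pderiv 1 (F i)) * ((Phi F)^[k] 0 1))
            - (eval 0 (pderiv 0 (pderiv 0 (F i))) * ((Phi F)^[k] 0 0) * ((Phi F)^[k] 0 0)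
               + eval 0 (pderiv 1 (pderiv 0 (F i))) * ((Phi F)^[k] 0 0) * ((Phi F)^[k] 0 1)
               + (eval 0 (pderiv 0 (pderiv 1 (F i))) * ((Phi F)^[k] 0 1) * ((Phi F)^[k] 0 0)
                  + eval 0 (pderiv 1 (pderiv 1 (F i))) * ((Phi F)^[k] 0 1) * ((Phi F)^[k] 0 1))) :=
          dvd_trans (pow_dvd_pow _ (by omega : v+1 ≤ 3*v)) (step_exp F v _ hxk i)
        have hS : (p:ℤ_[p])^(v+1) ∣
            (eval 0 (pderiv 0 (pderiv 0 (F i))) * ((Phi F)^[k] 0 0) * ((Phi F)^[k] 0 0)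
               + eval 0 (pderiv 1 (pderiv 0 (F i))) * ((Phi F)^[k] 0 0) * ((Phi F)^[k] 0 1)
               + (eval 0 (pderiv 0 (pderiv 1 (F i))) * ((Phi F)^[k] 0 1) * ((Phi F)^[k] 0 0)
                  + eval 0 (pderiv 1 (pderiv 1 (F i))) * ((Phi F)^[k] 0 1) * ((Phi F)^[k] 0 1))) :=
          dvd_add (dvd_add (hq _ _ _) (hq _ _ _)) (dvd_add (hq _ _ _) (hq _ _ _))
        have hL : (p:ℤ_[p])^(v+1) ∣ 2 * (eval 0 (pderiv 0 (F i)) * ((Phi F)^[k] 0 0)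
                   + eval 0 (pderiv 1 (F i)) * ((Phi F)^[k] 0 1)) - 2 * ((Phi F)^[k] 0 i) := by
          obtain ⟨a0, ha0⟩ := hF.2 i 0
          obtain ⟨a1, ha1⟩ := hF.2 i 1
          obtain ⟨w0, hw0⟩ := hxk 0
          obtain ⟨w1, hw1⟩ := hxk 1
          have hI : (if i = 0 then (1:ℤ_[p]) else 0) * ((Phi F)^[k] 0 0)
              + (if i = 1 then (1:ℤ_[p]) else 0) * ((Phi F)^[k] 0 1) = (Phi F)^[k] 0 i := by
            fin_cases i <;> simp
          refine ⟨2*(a0*w0 + a1*w1), ?_⟩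
          linear_combination 2*((Phi F)^[k] 0 0)*ha0 + 2*((Phi F)^[k] 0 1)*ha1 + 2*hI
            + 2*(p:ℤ_[p])*a0*hw0 + 2*(p:ℤ_[p])*a1*hw1
        have hIH : (p:ℤ_[p])^(v+1) ∣ 2 * ((Phi F)^[k] 0 i) - 2*(k:ℤ_[p]) * Phi F 0 i := ih i
        have total := dvd_add (dvd_add (dvd_add hT' hS) hL) hIH
        convert total using 1
        rw [show Phi F 0 i = eval 0 (F i) from rfl]
        push_cast
        ring
    intro i
    have hNi := claim N i
    rw [hper] at hNi
    simp only [Pi.zero_apply, mul_zero, zero_sub, dvd_neg] at hNi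
    have hu : IsUnit ((2:ℤ_[p]) * (N:ℤ_[p])) := h2.mul (isUnit_cast_of_not_dvd hpN)
    refine dvd_of_dvd_unit_mul hu ?_
    have : (2:ℤ_[p]) * (N:ℤ_[p]) * Phi F 0 i = 2 * (N:ℤ_[p]) * Phi F 0 i := by ring
    rw [this]
    exact hNi
  have all : ∀ n, ∀ i, (p:ℤ_[p])^n ∣ Phi F 0 i := by
    intro n
    induction n with
    | zero => intro i; simp
    | succ n ih =>
        rcases Nat.eq_zero_or_pos n with h | h
        · subst h; intro i; rw [pow_one]; exact hF.1 i
        · exact key n h ih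
  funext i
  exact eq_zero_of_forall_pow_dvd _ (fun n => all n i)

def Aseq : ℕ → ℕ
  | 0 => 0
  | k + 1 => Aseq k + 2 * k

def Sseq : ℕ → ℕ
  | 0 => 0
  | k + 1 => Sseq k + k ^ 2

lemma Aseq_succ (k : ℕ) : Aseq (k + 1) = Aseq k + 2 * k := rfl
lemma Sseq_succ (k : ℕ) : Sseq (k + 1) = Sseq k + k ^ 2 := rfl

lemma Aseq_eq (k : ℕ) : Aseq k = k * k - k := by
  induction k with
  | zero => rfl
  | succ k ih =>
      have h1 : (k+1)*(k+1) = k*k + 2*k + 1 := by ring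
      have h2 : k ≤ k * k := by nlinarith
      rw [Aseq_succ, ih]
      omega

lemma dvd_Aseq (p : ℕ) : p ∣ Aseq p := by
  rw [Aseq_eq]
  exact Nat.dvd_sub (dvd_mul_right p p) dvd_rfl

lemma six_Sseq (n : ℕ) : (6 : ℤ) * (Sseq n : ℤ) = n * (n - 1) * (2 * n - 1) := by
  induction n with
  | zero => simp [Sseq]
  | succ n ih =>
      rw [Sseq_succ]
      push_cast
      push_cast at ih
      linear_combination ih

lemma dvd_Sseq {p : ℕ} (hp : p.Prime) (hp5 : 5 ≤ p) : p ∣ Sseq p := by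
  have h6 : (p : ℤ) ∣ 6 * (Sseq p : ℤ) := by
    rw [six_Sseq]
    exact Dvd.dvd.mul_right (dvd_refl _) _ |>.mul_right _
  have h6' : p ∣ 6 * Sseq p := by exact_mod_cast h6
  have hcop : Nat.Coprime p 6 := (Nat.Prime.coprime_iff_not_dvd hp).mpr (by
    intro hd
    have := Nat.le_of_dvd (by norm_num) hd
    interval_cases p
    · exact absurd hd (by decide)
    · exact absurd hp (by decide))
  exact hcop.dvd_of_dvd_mul_left h6'

set_option maxHeartbeats 2000000 in
lemma lemB (F : Fin 2 → MvPolynomial (Fin 2) ℤ_[p]) (hF : GoodF F) (hp5 : 5 ≤ p)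
    (hper : (Phi F)^[p] 0 = 0) : Phi F 0 = 0 := by
  have h2 : IsUnit (2 : ℤ_[p]) := isUnit_two_padic hp5
  have hp0 : (p : ℤ_[p]) ≠ 0 := Nat.cast_ne_zero.mpr hpp.out.ne_zero
  have key : ∀ v, 1 ≤ v → (∀ i, (p:ℤ_[p])^v ∣ Phi F 0 i) →
      ∀ i, (p:ℤ_[p])^(v+1) ∣ Phi F 0 i := by
    intro v hv hδ
    have hps2 : (p:ℤ_[p])^(v+2) = (p:ℤ_[p]) * (p:ℤ_[p])^(v+1) := by ring
    have hU : ∀ i, (p:ℤ_[p])^(v+1) ∣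
        ((eval 0 (pderiv 0 (F i)) - if i = 0 then 1 else 0) * Phi F 0 0
         + (eval 0 (pderiv 1 (F i)) - if i = 1 then 1 else 0) * Phi F 0 1) := by
      intro i
      have e0 := mul_dvd_mul (hF.2 i 0) (hδ 0)
      have e1 := mul_dvd_mul (hF.2 i 1) (hδ 1)
      have := dvd_add e0 e1
      rwa [← pow_succ'] at this
    have hW : ∀ i, (p:ℤ_[p])^(v+1) ∣
        (eval 0 (pderiv 0 (pderiv 0 (F i))) * Phi F 0 0 * Phi F 0 0
         + eval 0 (pderiv 1 (pderiv 0 (F i))) * Phi F 0 0 * Phi F 0 1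
         + (eval 0 (pderiv 0 (pderiv 1 (F i))) * Phi F 0 1 * Phi F 0 0
            + eval 0 (pderiv 1 (pderiv 1 (F i))) * Phi F 0 1 * Phi F 0 1)) := by
      intro i
      have hq : ∀ (e : ℤ_[p]) (a b : Fin 2), (p:ℤ_[p])^(v+1) ∣ e * Phi F 0 a * Phi F 0 b := by
        intro e a b
        refine dvd_trans (pow_dvd_pow _ (by omega : v+1 ≤ v+v)) ?_
        rw [mul_assoc, pow_add]
        exact Dvd.dvd.mul_left (mul_dvd_mul (hδ a) (hδ b)) e
      exact dvd_add (dvd_add (hq _ _ _) (hq _ _ _)) (dvd_add (hq _ _ _) (hq _ _ _))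
    have claim : ∀ k, ∀ i, (p:ℤ_[p])^(v+2) ∣
        2 * ((Phi F)^[k] 0 i) - 2*(k:ℤ_[p]) * Phi F 0 i
        - (Aseq k : ℤ_[p]) * ((eval 0 (pderiv 0 (F i)) - if i = 0 then 1 else 0) * Phi F 0 0
            + (eval 0 (pderiv 1 (F i)) - if i = 1 then 1 else 0) * Phi F 0 1)
        - (Sseq k : ℤ_[p]) * (eval 0 (pderiv 0 (pderiv 0 (F i))) * Phi F 0 0 * Phi F 0 0
            + eval 0 (pderiv 1 (pderiv 0 (F i))) * Phi F 0 0 * Phi F 0 1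
            + (eval 0 (pderiv 0 (pderiv 1 (F i))) * Phi F 0 1 * Phi F 0 0
               + eval 0 (pderiv 1 (pderiv 1 (F i))) * Phi F 0 1 * Phi F 0 1)) := by
      intro k
      induction k with
      | zero => intro i; simp [Aseq, Sseq]
      | succ k ih =>
        have hdiff : ∀ j, (p:ℤ_[p])^(v+1) ∣
            2 * ((Phi F)^[k] 0 j) - 2*(k:ℤ_[p]) * Phi F 0 j := by
          intro j
          have h1 := dvd_trans (pow_dvd_pow ((p:ℤ_[p])) (by omega : v+1 ≤ v+2)) (ih j)
          have h2' := dvd_add (dvd_add h1 (Dvd.dvd.mul_left (hU j) ((Aseq k : ℤ_[p]))))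
            (Dvd.dvd.mul_left (hW j) ((Sseq k : ℤ_[p])))
          convert h2' using 1
          ring
        have hxk : ∀ j, (p:ℤ_[p])^v ∣ (Phi F)^[k] 0 j := by
          intro j
          refine dvd_of_dvd_unit_mul h2 ?_
          have h1 : (p:ℤ_[p])^v ∣ 2 * ((Phi F)^[k] 0 j) - 2*(k:ℤ_[p]) * Phi F 0 j :=
            dvd_trans (pow_dvd_pow _ (by omega)) (hdiff j)
          have h2' : (p:ℤ_[p])^v ∣ 2*(k:ℤ_[p]) * Phi F 0 j := Dvd.dvd.mul_left (hδ j) _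
          have := dvd_add h1 h2'
          simpa [mul_comm] using this
        intro i
        rw [Function.iterate_succ_apply']
        have hPa : ∀ x : Fin 2 → ℤ_[p], Phi F x i = eval x (F i) := fun _ => rfl
        rw [hPa, Aseq_succ, Sseq_succ]
        push_cast
        -- Taylor step
        have hT := dvd_trans (pow_dvd_pow ((p:ℤ_[p])) (by omega : v+2 ≤ 3*v))
          (step_exp F v _ hxk i)
        rw [show eval (0 : Fin 2 → ℤ_[p]) (F i) = Phi F 0 i from rfl] at hT
        -- quadratic comparison
        have hBt : ∀ (e y : ℤ_[p]) (b : Fin 2), (p:ℤ_[p])^v ∣ y →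
            (p:ℤ_[p])^(v+2) ∣ e * y * (2 * ((Phi F)^[k] 0 b) - 2*(k:ℤ_[p]) * Phi F 0 b) := by
          intro e y b hy
          refine dvd_trans (pow_dvd_pow _ (by omega : v+2 ≤ v+(v+1))) ?_
          rw [mul_assoc, pow_add]
          exact Dvd.dvd.mul_left (mul_dvd_mul hy (hdiff b)) e
        have hx2 : ∀ a : Fin 2, (p:ℤ_[p])^v ∣ 2 * ((Phi F)^[k] 0 a) :=
          fun a => Dvd.dvd.mul_left (hxk a) 2
        have hd2 : ∀ a : Fin 2, (p:ℤ_[p])^v ∣ 2*(k:ℤ_[p]) * Phi F 0 a :=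
          fun a => Dvd.dvd.mul_left (hδ a) _
        have h8 := dvd_add (dvd_add
            (dvd_add (hBt (eval 0 (pderiv 0 (pderiv 0 (F i)))) _ 0 (hx2 0))
                     (hBt (eval 0 (pderiv 0 (pderiv 0 (F i)))) _ 0 (hd2 0)))
            (dvd_add (hBt (eval 0 (pderiv 1 (pderiv 0 (F i)))) _ 1 (hx2 0))
                     (hBt (eval 0 (pderiv 1 (pderiv 0 (F i)))) _ 0 (hd2 1))))
          (dvd_add
            (dvd_add (hBt (eval 0 (pderiv 0 (pderiv 1 (F i)))) _ 0 (hx2 1))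
                     (hBt (eval 0 (pderiv 0 (pderiv 1 (F i)))) _ 1 (hd2 0)))
            (dvd_add (hBt (eval 0 (pderiv 1 (pderiv 1 (F i)))) _ 1 (hx2 1))
                     (hBt (eval 0 (pderiv 1 (pderiv 1 (F i)))) _ 1 (hd2 1))))
        have h44 : (p:ℤ_[p])^(v+2) ∣ 2 * (2 * (
            (eval 0 (pderiv 0 (pderiv 0 (F i))) * ((Phi F)^[k] 0 0) * ((Phi F)^[k] 0 0)
             + eval 0 (pderiv 1 (pderiv 0 (F i))) * ((Phi F)^[k] 0 0) * ((Phi F)^[k] 0 1)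
             + (eval 0 (pderiv 0 (pderiv 1 (F i))) * ((Phi F)^[k] 0 1) * ((Phi F)^[k] 0 0)
                + eval 0 (pderiv 1 (pderiv 1 (F i))) * ((Phi F)^[k] 0 1) * ((Phi F)^[k] 0 1)))
            - (k:ℤ_[p])^2 * (eval 0 (pderiv 0 (pderiv 0 (F i))) * Phi F 0 0 * Phi F 0 0
               + eval 0 (pderiv 1 (pderiv 0 (F i))) * Phi F 0 0 * Phi F 0 1
               + (eval 0 (pderiv 0 (pderiv 1 (F i))) * Phi F 0 1 * Phi F 0 0
                  + eval 0 (pderiv 1 (pderiv 1 (F i))) * Phi F 0 1 * Phi F 0 1)))) := by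
          convert h8 using 1
          ring
        have hB := dvd_of_dvd_unit_mul h2 (dvd_of_dvd_unit_mul h2 h44)
        -- linear comparison
        have hC8 := dvd_add
          (by rw [hps2] ; exact mul_dvd_mul (hF.2 i 0) (hdiff 0) :
            (p:ℤ_[p])^(v+2) ∣ (eval 0 (pderiv 0 (F i)) - if i = 0 then 1 else 0)
              * (2 * ((Phi F)^[k] 0 0) - 2*(k:ℤ_[p]) * Phi F 0 0))
          (by rw [hps2] ; exact mul_dvd_mul (hF.2 i 1) (hdiff 1) :
            (p:ℤ_[p])^(v+2) ∣ (eval 0 (pderiv 1 (F i)) - if i = 1 then 1 else 0)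
              * (2 * ((Phi F)^[k] 0 1) - 2*(k:ℤ_[p]) * Phi F 0 1))
        have hI : (if i = 0 then (1:ℤ_[p]) else 0) * ((Phi F)^[k] 0 0)
            + (if i = 1 then (1:ℤ_[p]) else 0) * ((Phi F)^[k] 0 1) = (Phi F)^[k] 0 i := by
          fin_cases i <;> simp
        have hC : (p:ℤ_[p])^(v+2) ∣ 2 * (eval 0 (pderiv 0 (F i)) * ((Phi F)^[k] 0 0)
              + eval 0 (pderiv 1 (F i)) * ((Phi F)^[k] 0 1))
            - 2 * ((Phi F)^[k] 0 i)
            - 2*(k:ℤ_[p]) * ((eval 0 (pderiv 0 (F i)) - if i = 0 then 1 else 0) * Phi F 0 0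
              + (eval 0 (pderiv 1 (F i)) - if i = 1 then 1 else 0) * Phi F 0 1) := by
          convert hC8 using 1
          linear_combination (2 : ℤ_[p]) * hI
        have total := dvd_add (dvd_add (dvd_add hT hB) hC) (ih i)
        convert total using 1
        push_cast
        ring
    intro i
    have hNi := claim p i
    rw [hper] at hNi
    simp only [Pi.zero_apply, mul_zero, zero_sub] at hNi
    obtain ⟨mA, hmA⟩ := dvd_Aseq p
    obtain ⟨mS, hmS⟩ := dvd_Sseq hpp.out hp5
    have hAU : (p:ℤ_[p])^(v+2) ∣ (Aseq p : ℤ_[p]) *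
        ((eval 0 (pderiv 0 (F i)) - if i = 0 then 1 else 0) * Phi F 0 0
         + (eval 0 (pderiv 1 (F i)) - if i = 1 then 1 else 0) * Phi F 0 1) := by
      rw [hmA]
      push_cast
      rw [mul_assoc, hps2]
      exact mul_dvd_mul (dvd_refl _) (Dvd.dvd.mul_left (hU i) _)
    have hSW : (p:ℤ_[p])^(v+2) ∣ (Sseq p : ℤ_[p]) *
        (eval 0 (pderiv 0 (pderiv 0 (F i))) * Phi F 0 0 * Phi F 0 0
         + eval 0 (pderiv 1 (pderiv 0 (F i))) * Phi F 0 0 * Phi F 0 1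
         + (eval 0 (pderiv 0 (pderiv 1 (F i))) * Phi F 0 1 * Phi F 0 0
            + eval 0 (pderiv 1 (pderiv 1 (F i))) * Phi F 0 1 * Phi F 0 1)) := by
      rw [hmS]
      push_cast
      rw [mul_assoc, hps2]
      exact mul_dvd_mul (dvd_refl _) (Dvd.dvd.mul_left (hW i) _)
    have hfin : (p:ℤ_[p])^(v+2) ∣ (p:ℤ_[p]) * (2 * Phi F 0 i) := by
      have := dvd_add (dvd_add hNi hAU) hSW
      convert this.neg_right using 1
      push_cast
      ring
    rw [hps2] at hfin
    have hfin2 : (p:ℤ_[p])^(v+1) ∣ 2 * Phi F 0 i :=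
      (mul_dvd_mul_iff_left hp0).mp hfin
    exact dvd_of_dvd_unit_mul h2 hfin2
  have all : ∀ n, ∀ i, (p:ℤ_[p])^n ∣ Phi F 0 i := by
    intro n
    induction n with
    | zero => intro i; simp
    | succ n ih =>
        rcases Nat.eq_zero_or_pos n with h | h
        · subst h; intro i; rw [pow_one]; exact hF.1 i
        · exact key n h ih
  funext i
  exact eq_zero_of_forall_pow_dvd _ (fun n => all n i)

lemma mainRed (F : Fin 2 → MvPolynomial (Fin 2) ℤ_[p]) (hF : GoodF F) (hp5 : 5 ≤ p) :
    ∀ N, 0 < N → (Phi F)^[N] 0 = 0 → Phi F 0 = 0 := by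
  intro N
  induction N using Nat.strong_induction_on with
  | _ N ih =>
    intro hN hper
    by_cases hpN : p ∣ N
    · obtain ⟨M, rfl⟩ := hpN
      have hM : 0 < M := by
        rcases Nat.eq_zero_or_pos M with h | h
        · subst h; simp at hN
        · exact h
      have hG : GoodF (iterF F M) := goodF_iterF F hF M
      have hGp : (Phi (iterF F M))^[p] 0 = 0 := by
        rw [Phi_iterF, ← Function.iterate_mul, mul_comm]
        exact hper
      have h1 : Phi (iterF F M) 0 = 0 := lemB (iterF F M) hG hp5 hGp
      rw [Phi_iterF] at h1
      have hlt : M < p * M := by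
        calc M = 1 * M := (one_mul M).symm
        _ < p * M := (Nat.mul_lt_mul_right hM).mpr (by omega)
      exact ih M hlt hM h1
    · exact lemA F hF hp5 N hpN hper

/-- for a prime `p ≥ 5` and a polynomial map `ψ : ℤ_p² → ℤ_p²` fixing
the origin mod `p`, with Jacobian at the origin congruent to the identity mod `p`
and with unit determinant, the origin cannot have exact period `N > 1`: it must be
a fixed point. -/
theorem stmt14 (p : ℕ) [Fact p.Prime] (hp : 5 ≤ p)
    (F G : MvPolynomial (Fin 2) ℤ_[p])
    (ψ : ℤ_[p] × ℤ_[p] → ℤ_[p] × ℤ_[p])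
    (hψ : ∀ P : ℤ_[p] × ℤ_[p],
      ψ P = (eval ![P.1, P.2] F, eval ![P.1, P.2] G))
    (J : Matrix (Fin 2) (Fin 2) ℤ_[p])
    (hJ : J = !![eval ![0, 0] (pderiv 0 F), eval ![0, 0] (pderiv 1 F);
                 eval ![0, 0] (pderiv 0 G), eval ![0, 0] (pderiv 1 G)])
    (hfix : (p : ℤ_[p]) ∣ (ψ (0, 0)).1 ∧ (p : ℤ_[p]) ∣ (ψ (0, 0)).2)
    (hJI : ∃ A : Matrix (Fin 2) (Fin 2) ℤ_[p], J = 1 + (p : ℤ_[p]) • A)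
    (hdet : IsUnit J.det)
    (N : ℕ) (hN1 : 1 ≤ N) (hper : ψ^[N] (0, 0) = (0, 0))
    (hmin : ∀ m : ℕ, 1 ≤ m → ψ^[m] (0, 0) = (0, 0) → N ≤ m) :
    N = 1 := by
  set Fv : Fin 2 → MvPolynomial (Fin 2) ℤ_[p] := ![F, G] with hFv
  have h00 : (![0, 0] : Fin 2 → ℤ_[p]) = 0 := by
    funext i; fin_cases i <;> simp
  have hm : ∀ P : ℤ_[p] × ℤ_[p], (![P.1, P.2] : Fin 2 → ℤ_[p]) = ![P.1, P.2] := fun _ => rfl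
  have hsemi : ∀ P : ℤ_[p] × ℤ_[p],
      (![(ψ P).1, (ψ P).2] : Fin 2 → ℤ_[p]) = Phi Fv ![P.1, P.2] := by
    intro P
    funext i
    rw [hψ]
    fin_cases i <;> simp [Phi, hFv]
  have hiter : ∀ n : ℕ, ∀ P : ℤ_[p] × ℤ_[p],
      (![(ψ^[n] P).1, (ψ^[n] P).2] : Fin 2 → ℤ_[p]) = (Phi Fv)^[n] ![P.1, P.2] := by
    intro n
    induction n with
    | zero => intro P; simp
    | succ n ihn =>
        intro P
        rw [Function.iterate_succ_apply', Function.iterate_succ_apply', ← ihn P, hsemi]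
  have hgood : GoodF Fv := by
    constructor
    · intro i
      have h1 := hfix.1
      have h2 := hfix.2
      rw [hψ] at h1 h2
      simp only [h00] at h1 h2
      fin_cases i
      · exact h1
      · exact h2
    · intro i j
      obtain ⟨A, hA⟩ := hJI
      have hE := hJ.symm.trans hA
      have hij := congrFun (congrFun hE i) j
      refine ⟨A i j, ?_⟩
      fin_cases i <;> fin_cases j <;>
      · simp only [hFv, h00, Matrix.one_apply, Matrix.add_apply, Matrix.smul_apply,
          Matrix.cons_val', Matrix.cons_val_zero, Matrix.cons_val_one, Matrix.head_cons,
          Matrix.head_fin_const, Matrix.empty_val', Matrix.cons_val_fin_one, smul_eq_mul,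
          Fin.isValue, Fin.mk_zero, Fin.mk_one, Matrix.of_apply] at hij ⊢
        norm_num at hij ⊢
        linear_combination hij
  have hper' : (Phi Fv)^[N] 0 = 0 := by
    have := hiter N (0, 0)
    rw [hper] at this
    simp only [h00] at this
    exact this.symm
  have hfix1 : Phi Fv 0 = 0 := mainRed Fv hgood hp N (by omega) hper'
  have hψ0 : ψ (0, 0) = (0, 0) := by
    have := hsemi (0, 0)
    simp only [h00, hfix1] at this
    have h0 : (![(ψ (0,0)).1, (ψ (0,0)).2] : Fin 2 → ℤ_[p]) = 0 := this
    have e1 := congrFun h0 0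
    have e2 := congrFun h0 1
    simp only [Matrix.cons_val_zero, Matrix.cons_val_one, Matrix.head_cons, Pi.zero_apply] at e1 e2
    exact Prod.ext e1 e2
  have : ψ^[1] (0, 0) = (0, 0) := by simpa using hψ0
  exact le_antisymm (hmin 1 le_rfl this) hN1
end
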